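/- arXiv:1706.06091 — 5 statements merged into one kernel-verified Lean document; each statement's English description precedes it below -/
import Mathlib

section
/- The number of independent sets of size k in the cycle graph C_p on p ≥ 3 vertices equals (p/(p-k))·C(p-k, k), the coefficient of x^k in the p-th Lucas polynomial. -/
open Finset

def pathSets (n k : ℕ) : Finset (Finset ℕ) :=
  ((Finset.range n).powerset).filter (fun s => s.card = k ∧ ∀ i ∈ s, i + 1 ∉ s)

lemma pathSets_zero (n : ℕ) : pathSets n 0 = {∅} := by
  ext s
  simp only [pathSets, mem_filter, mem_powerset, mem_singleton, Finset.card_eq_zero]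
  constructor
  · rintro ⟨-, h, -⟩; exact h
  · rintro rfl; simp

lemma pathSets_card : ∀ n k, (pathSets n k).card = Nat.choose (n + 1 - k) k := by
  intro n
  induction n using Nat.strong_induction_on with
  | _ n ih =>
    match n with
    | 0 =>
      intro k
      match k with
      | 0 => rw [pathSets_zero]; simp
      | (k+1) =>
        have : pathSets 0 (k+1) = ∅ := by
          ext s
          simp only [pathSets, mem_filter, mem_powerset, Finset.notMem_empty, iff_false]
          rintro ⟨hs, hc, -⟩
          simp only [Finset.range_zero, Finset.subset_empty] at hs
          subst hs; simp at hc
        rw [this]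
        simp [Nat.choose_eq_zero_of_lt]
    | 1 =>
      intro k
      match k with
      | 0 => rw [pathSets_zero]; simp
      | 1 =>
        have : pathSets 1 1 = {{0}} := by
          ext s
          simp only [pathSets, mem_filter, mem_powerset, mem_singleton]
          constructor
          · rintro ⟨hs, hc, -⟩
            rw [Finset.range_one, Finset.subset_singleton_iff] at hs
            rcases hs with rfl | rfl
            · simp at hc
            · rfl
          · rintro rfl; simp
        rw [this]; simp
      | (k+2) =>
        have : pathSets 1 (k+2) = ∅ := by
          ext s
          simp only [pathSets, mem_filter, mem_powerset, Finset.notMem_empty, iff_false]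
          rintro ⟨hs, hc, -⟩
          have := Finset.card_le_card hs
          simp [hc] at this
        rw [this]
        have : 1 + 1 - (k+2) = 0 := by omega
        rw [this]
        simp [Nat.choose_eq_zero_of_lt]
    | (m+2) =>
      intro k
      match k with
      | 0 => rw [pathSets_zero]; simp
      | (k+1) =>
        classical
        have hsplit := Finset.card_filter_add_card_filter_not
          (s := pathSets (m+2) (k+1)) (p := fun s => (m+1) ∈ s)
        -- sets not containing m+1
        have h1 : (pathSets (m+2) (k+1)).filter (fun s => ¬ (m+1) ∈ s)
            = pathSets (m+1) (k+1) := by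
          ext s
          simp only [pathSets, mem_filter, mem_powerset]
          constructor
          · rintro ⟨⟨hs, hc, hind⟩, hmem⟩
            refine ⟨?_, hc, hind⟩
            intro x hx
            have := hs hx
            simp only [Finset.mem_range] at this ⊢
            rcases Nat.lt_succ_iff_lt_or_eq.mp this with h | h
            · exact h
            · exact absurd (h ▸ hx) hmem
          · rintro ⟨hs, hc, hind⟩
            have hsub : s ⊆ Finset.range (m+2) := hs.trans (by
              intro x hx; simp only [Finset.mem_range] at *; omega)
            refine ⟨⟨hsub, hc, hind⟩, fun hmem => ?_⟩
            have := hs hmem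
            simp at this
        -- sets containing m+1
        have h2 : ((pathSets (m+2) (k+1)).filter (fun s => (m+1) ∈ s)).card
            = (pathSets m k).card := by
          apply Finset.card_nbij' (fun s => s.erase (m+1)) (fun t => insert (m+1) t)
          · intro s hs
            simp only [Finset.mem_coe, pathSets, mem_filter, mem_powerset] at hs ⊢
            obtain ⟨⟨hsub, hc, hind⟩, hmem⟩ := hs
            refine ⟨?_, ?_, ?_⟩
            · intro x hx
              rw [Finset.mem_erase] at hx
              have := hsub hx.2
              simp only [Finset.mem_range] at this ⊢
              rcases Nat.lt_succ_iff_lt_or_eq.mp this with h | h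
              · rcases Nat.lt_succ_iff_lt_or_eq.mp h with h' | h'
                · exact h'
                · exfalso; exact hind x hx.2 (by rw [h']; exact hmem)
              · exact absurd h hx.1
            · rw [Finset.card_erase_of_mem hmem, hc]; rfl
            · intro i hi
              rw [Finset.mem_erase] at hi ⊢
              intro h
              exact hind i hi.2 h.2
          · intro t ht
            simp only [Finset.mem_coe, pathSets, mem_filter, mem_powerset] at ht ⊢
            obtain ⟨hsub, hc, hind⟩ := ht
            have hnot : (m+1) ∉ t := fun h => by have := hsub h; simp at this
            refine ⟨⟨?_, ?_, ?_⟩, Finset.mem_insert_self _ _⟩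
            · intro x hx
              rw [Finset.mem_insert] at hx
              rcases hx with rfl | hx
              · simp
              · have := hsub hx; simp only [Finset.mem_range] at this ⊢; omega
            · rw [Finset.card_insert_of_notMem hnot, hc]
            · intro i hi
              rw [Finset.mem_insert] at hi
              rw [Finset.mem_insert]
              rintro (h | h)
              · rcases hi with rfl | hi
                · omega
                · have := hsub hi; simp only [Finset.mem_range] at this; omega
              · rcases hi with rfl | hi
                · have := hsub h; simp only [Finset.mem_range] at this; omega
                · exact hind i hi h
          · intro s hs
            simp only [Finset.mem_coe, mem_filter] at hs
            exact Finset.insert_erase hs.2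
          · intro t ht
            simp only [Finset.mem_coe, pathSets, mem_filter, mem_powerset] at ht
            have hnot : (m+1) ∉ t := fun h => by have := ht.1 h; simp at this
            exact Finset.erase_insert hnot
        rw [h1] at hsplit
        rw [h2] at hsplit
        rw [ih (m+1) (by omega) (k+1), ih m (by omega) k] at hsplit
        rw [← hsplit]
        by_cases hk : k ≤ m + 1
        · have e1 : m + 2 + 1 - (k+1) = (m + 1 + 1 - (k+1)) + 1 := by omega
          have e2 : m + 1 + 1 - (k + 1) = m + 1 - k := by omega
          rw [e1, e2, Nat.choose_succ_succ]
          try omega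
        · have e1 : m + 2 + 1 - (k+1) = 0 ∨ (m + 2 + 1 - (k+1) = 1 ∧ k = m + 2) := by omega
          have e2 : m + 1 + 1 - (k+1) = 0 := by omega
          have e3 : m + 1 - k = 0 := by omega
          rw [e2, e3]
          have c1 : Nat.choose 0 (k+1) = 0 := Nat.choose_eq_zero_of_lt (by omega)
          have c2 : Nat.choose 0 k = 0 := Nat.choose_eq_zero_of_lt (by omega)
          rcases e1 with h | ⟨h, hkm⟩
          · rw [h, c1, c2]
          · rw [h, c1, c2, Nat.choose_eq_zero_of_lt (show 1 < k + 1 by omega)]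

/-- The number `N` of independent sets of size `k` in the cycle graph `C_p` on `p ≥ 3`
vertices (vertices `0, …, p-1`, with `i` adjacent to `i+1 mod p`) equals
`(p/(p-k))·C(p-k, k)`, the coefficient of `x^k` in the `p`-th Lucas polynomial;
stated without division as `N * (p - k) = p * C(p-k, k)`. -/
theorem stmt5 (p k : ℕ) (hp : 3 ≤ p) :
    ((Finset.univ : Finset (Finset (Fin p))).filter
        (fun s => s.card = k ∧ ∀ i ∈ s, ∀ j ∈ s, (i.val + 1) % p ≠ j.val)).card * (p - k) =
      p * Nat.choose (p - k) k := by
  classical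
  rcases Nat.eq_zero_or_pos k with rfl | hk0
  · have h : ((Finset.univ : Finset (Finset (Fin p))).filter
        (fun s => s.card = 0 ∧ ∀ i ∈ s, ∀ j ∈ s, (i.val + 1) % p ≠ j.val)) = {∅} := by
      ext s
      simp only [mem_filter, mem_univ, true_and, mem_singleton, Finset.card_eq_zero]
      constructor
      · rintro ⟨rfl, -⟩; rfl
      · rintro rfl; simp
    rw [h]
    simp
  by_cases hkp : p ≤ k
  · rw [show p - k = 0 by omega, Nat.mul_zero,
      Nat.choose_eq_zero_of_lt (by omega), Nat.mul_zero]
  push_neg at hkp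
  obtain ⟨m, rfl⟩ : ∃ m, k = m + 1 := ⟨k - 1, by omega⟩
  set k := m + 1 with hk
  set S := ((Finset.univ : Finset (Finset (Fin p))).filter
        (fun s => s.card = k ∧ ∀ i ∈ s, ∀ j ∈ s, (i.val + 1) % p ≠ j.val)) with hSdef
  set z : Fin p := ⟨0, by omega⟩ with hz
  have hsplit := Finset.card_filter_add_card_filter_not (s := S) (p := fun s => z ∈ s)
  -- sets not containing 0 ↔ pathSets (p-1) k
  have hA : (S.filter (fun s => ¬ z ∈ s)).card = (pathSets (p - 1) k).card := by
    apply Finset.card_nbij' (fun s => s.image (fun x : Fin p => x.val - 1))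
      (fun t => t.image (fun a : ℕ => (⟨(a + 1) % p, Nat.mod_lt _ (by omega)⟩ : Fin p)))
    · intro s hs
      simp only [Finset.mem_coe, hSdef, mem_filter, mem_univ, true_and] at hs
      obtain ⟨⟨hc, hind⟩, h0⟩ := hs
      have hpos : ∀ x ∈ s, 1 ≤ x.val := by
        intro x hx
        rcases Nat.eq_zero_or_pos x.val with h | h
        · exfalso; apply h0; have : x = z := Fin.ext h; rwa [this] at hx
        · exact h
      simp only [Finset.mem_coe, pathSets, mem_filter, mem_powerset]
      refine ⟨?_, ?_, ?_⟩
      · intro a ha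
        simp only [Finset.mem_image] at ha
        obtain ⟨x, hx, rfl⟩ := ha
        have := x.isLt
        have := hpos x hx
        simp only [Finset.mem_range]; omega
      · rw [Finset.card_image_of_injOn, hc]
        intro x hx y hy hxy
        have hxy2 : x.val - 1 = y.val - 1 := hxy
        have := hpos x hx; have := hpos y hy
        exact Fin.ext (by omega)
      · intro a ha hb
        simp only [Finset.mem_image] at ha hb
        obtain ⟨x, hx, hx'⟩ := ha
        obtain ⟨y, hy, hy'⟩ := hb
        have h1 := hpos x hx; have h2 := hpos y hy
        have h3 := x.isLt; have h4 := y.isLt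
        have : y.val = x.val + 1 := by omega
        exact hind x hx y hy (by rw [Nat.mod_eq_of_lt (by omega)]; omega)
    · intro t ht
      simp only [Finset.mem_coe, pathSets, mem_filter, mem_powerset] at ht
      obtain ⟨hsub, hc, hind⟩ := ht
      have hlt : ∀ a ∈ t, a < p - 1 := by
        intro a ha; have := hsub ha; simpa using this
      simp only [Finset.mem_coe, hSdef, mem_filter, mem_univ, true_and]
      refine ⟨⟨?_, ?_⟩, ?_⟩
      · rw [Finset.card_image_of_injOn, hc]
        intro a ha b hb hab
        have := hlt a ha; have := hlt b hb
        have : (a+1) % p = (b+1) % p := congrArg Fin.val hab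
        rw [Nat.mod_eq_of_lt (by omega), Nat.mod_eq_of_lt (by omega)] at this
        omega
      · intro x hx y hy
        simp only [Finset.mem_image] at hx hy
        obtain ⟨a, ha, rfl⟩ := hx
        obtain ⟨b, hb, rfl⟩ := hy
        have h1 := hlt a ha; have h2 := hlt b hb
        simp only
        rw [Nat.mod_eq_of_lt (show a + 1 < p by omega), Nat.mod_eq_of_lt (show b + 1 < p by omega)]
        intro h
        rcases Nat.lt_or_ge (a + 2) p with hlt2 | hge
        · rw [Nat.mod_eq_of_lt hlt2] at h
          have : b = a + 1 := by omega
          exact hind a ha (this ▸ hb)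
        · rw [show a + 1 + 1 = p from by omega, Nat.mod_self] at h
          omega
      · intro hzmem
        simp only [Finset.mem_image] at hzmem
        obtain ⟨a, ha, hcomp⟩ := hzmem
        have hla := hlt a ha
        have hv : (a+1) % p = z.val := congrArg Fin.val hcomp
        rw [Nat.mod_eq_of_lt (by omega)] at hv
        have hzv : z.val = 0 := rfl
        omega
    · intro s hs
      simp only [Finset.mem_coe, hSdef, mem_filter, mem_univ, true_and] at hs
      obtain ⟨⟨hc, hind⟩, h0⟩ := hs
      have hpos : ∀ x ∈ s, 1 ≤ x.val := by
        intro x hx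
        rcases Nat.eq_zero_or_pos x.val with h | h
        · exfalso; apply h0; have : x = z := Fin.ext h; rwa [this] at hx
        · exact h
      ext y
      simp only [Finset.mem_image]
      constructor
      · rintro ⟨a, ⟨x, hx, rfl⟩, rfl⟩
        have h1 := hpos x hx; have h2 := x.isLt
        have : (⟨(x.val - 1 + 1) % p, Nat.mod_lt _ (by omega)⟩ : Fin p) = x := Fin.ext (by
          simp only; rw [Nat.mod_eq_of_lt (by omega)]; omega)
        rwa [this]
      · intro hy
        refine ⟨y.val - 1, ⟨y, hy, rfl⟩, ?_⟩
        have h1 := hpos y hy; have h2 := y.isLt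
        exact Fin.ext (by simp only; rw [Nat.mod_eq_of_lt (by omega)]; omega)
    · intro t ht
      simp only [Finset.mem_coe, pathSets, mem_filter, mem_powerset] at ht
      have hlt : ∀ a ∈ t, a < p - 1 := by
        intro a ha; have := ht.1 ha; simpa using this
      ext b
      simp only [Finset.mem_image]
      constructor
      · rintro ⟨x, ⟨a, ha, rfl⟩, rfl⟩
        have := hlt a ha
        simp only
        rwa [Nat.mod_eq_of_lt (by omega), Nat.add_sub_cancel]
      · intro hb
        have := hlt b hb
        exact ⟨_, ⟨b, hb, rfl⟩, by simp only; rw [Nat.mod_eq_of_lt (by omega), Nat.add_sub_cancel]⟩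
  -- sets containing 0 ↔ pathSets (p-3) m
  have hB : (S.filter (fun s => z ∈ s)).card = (pathSets (p - 3) m).card := by
    apply Finset.card_nbij' (fun s => (s.erase z).image (fun x : Fin p => x.val - 2))
      (fun t => insert z (t.image (fun a : ℕ => (⟨(a + 2) % p, Nat.mod_lt _ (by omega)⟩ : Fin p))))
    · intro s hs
      simp only [Finset.mem_coe, hSdef, mem_filter, mem_univ, true_and] at hs
      obtain ⟨⟨hc, hind⟩, h0⟩ := hs
      have hrange : ∀ x ∈ s.erase z, 2 ≤ x.val ∧ x.val ≤ p - 2 := by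
        intro x hx
        rw [Finset.mem_erase] at hx
        obtain ⟨hne, hxs⟩ := hx
        have h2 := x.isLt
        have hzv : z.val = 0 := rfl
        have hne0 : x.val ≠ 0 := fun h => hne (Fin.ext (by rw [h, hzv]))
        have hne1 : x.val ≠ 1 := by
          intro h
          exact hind z h0 x hxs (by
            rw [hzv, h, Nat.mod_eq_of_lt (by omega)])
        have hnep : x.val ≠ p - 1 := by
          intro h
          apply hind x hxs z h0
          rw [hzv, h, show p - 1 + 1 = p by omega, Nat.mod_self]
        constructor <;> omega
      simp only [Finset.mem_coe, pathSets, mem_filter, mem_powerset]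
      refine ⟨?_, ?_, ?_⟩
      · intro a ha
        simp only [Finset.mem_image] at ha
        obtain ⟨x, hx, rfl⟩ := ha
        have := hrange x hx
        simp only [Finset.mem_range]; omega
      · rw [Finset.card_image_of_injOn, Finset.card_erase_of_mem h0, hc]
        · omega
        · intro x hx y hy hxy
          have hxy2 : x.val - 2 = y.val - 2 := hxy
          have := hrange x hx; have := hrange y hy
          exact Fin.ext (by omega)
      · intro a ha hb
        simp only [Finset.mem_image] at ha hb
        obtain ⟨x, hx, hx'⟩ := ha
        obtain ⟨y, hy, hy'⟩ := hb
        have h1 := hrange x hx; have h2 := hrange y hy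
        rw [Finset.mem_erase] at hx hy
        apply hind x hx.2 y hy.2
        rw [Nat.mod_eq_of_lt (by omega)]
        omega
    · intro t ht
      simp only [Finset.mem_coe, pathSets, mem_filter, mem_powerset] at ht
      obtain ⟨hsub, hc, hind⟩ := ht
      have hlt : ∀ a ∈ t, a < p - 3 := by
        intro a ha; have := hsub ha; simpa using this
      have hznot : z ∉ t.image (fun a : ℕ => (⟨(a + 2) % p, Nat.mod_lt _ (by omega)⟩ : Fin p)) := by
        simp only [Finset.mem_image, not_exists]
        rintro a ⟨ha, hcomp⟩
        have hla := hlt a ha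
        have hv : (a + 2) % p = z.val := congrArg Fin.val hcomp
        rw [Nat.mod_eq_of_lt (by omega)] at hv
        have hzv : z.val = 0 := rfl
        omega
      simp only [Finset.mem_coe, hSdef, mem_filter, mem_univ, true_and]
      refine ⟨⟨?_, ?_⟩, Finset.mem_insert_self _ _⟩
      · rw [Finset.card_insert_of_notMem hznot, Finset.card_image_of_injOn, hc]
        intro a ha b hb hab
        have := hlt a ha; have := hlt b hb
        have : (a+2) % p = (b+2) % p := congrArg Fin.val hab
        rw [Nat.mod_eq_of_lt (by omega), Nat.mod_eq_of_lt (by omega)] at this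
        omega
      · intro x hx y hy
        rw [Finset.mem_insert] at hx hy
        have hval : ∀ w : Fin p, w ∈ t.image (fun a : ℕ =>
            (⟨(a + 2) % p, Nat.mod_lt _ (by omega)⟩ : Fin p)) →
            ∃ a ∈ t, w.val = a + 2 := by
          intro w hw
          simp only [Finset.mem_image] at hw
          obtain ⟨a, ha, rfl⟩ := hw
          have := hlt a ha
          exact ⟨a, ha, by simp only; rw [Nat.mod_eq_of_lt (by omega)]⟩
        have hzv : z.val = 0 := rfl
        rcases hx with rfl | hx <;> rcases hy with rfl | hy
        · rw [hzv, Nat.mod_eq_of_lt (by omega)]; omega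
        · obtain ⟨b, hb, hbv⟩ := hval y hy
          have := hlt b hb
          rw [hzv, Nat.mod_eq_of_lt (by omega), hbv]; omega
        · obtain ⟨a, ha, hav⟩ := hval x hx
          have := hlt a ha
          rw [hav, Nat.mod_eq_of_lt (by omega), hzv]; omega
        · obtain ⟨a, ha, hav⟩ := hval x hx
          obtain ⟨b, hb, hbv⟩ := hval y hy
          have := hlt a ha; have := hlt b hb
          rw [hav, hbv, Nat.mod_eq_of_lt (by omega)]
          intro h
          have : b = a + 1 := by omega
          exact hind a ha (this ▸ hb)
    · intro s hs
      simp only [Finset.mem_coe, hSdef, mem_filter, mem_univ, true_and] at hs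
      obtain ⟨⟨hc, hind⟩, h0⟩ := hs
      have hrange : ∀ x ∈ s.erase z, 2 ≤ x.val ∧ x.val ≤ p - 2 := by
        intro x hx
        rw [Finset.mem_erase] at hx
        obtain ⟨hne, hxs⟩ := hx
        have h2 := x.isLt
        have hzv : z.val = 0 := rfl
        have hne0 : x.val ≠ 0 := fun h => hne (Fin.ext (by rw [h, hzv]))
        have hne1 : x.val ≠ 1 := by
          intro h
          exact hind z h0 x hxs (by
            rw [hzv, h, Nat.mod_eq_of_lt (by omega)])
        have hnep : x.val ≠ p - 1 := by
          intro h
          apply hind x hxs z h0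
          rw [hzv, h, show p - 1 + 1 = p by omega, Nat.mod_self]
        constructor <;> omega
      ext y
      simp only [Finset.mem_insert, Finset.mem_image, Finset.mem_erase]
      constructor
      · rintro (rfl | ⟨a, ⟨x, hx, rfl⟩, rfl⟩)
        · exact h0
        · obtain ⟨hge, hle⟩ := hrange x (Finset.mem_erase.mpr hx)
          have : (⟨(x.val - 2 + 2) % p, Nat.mod_lt _ (by omega)⟩ : Fin p) = x := Fin.ext (by
            simp only; rw [Nat.mod_eq_of_lt (by omega)]; omega)
          rw [this]
          exact hx.2
      · intro hy
        by_cases hyz : y = z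
        · left; exact hyz
        · right
          refine ⟨y.val - 2, ⟨y, ⟨hyz, hy⟩, rfl⟩, ?_⟩
          obtain ⟨hge, hle⟩ := hrange y (Finset.mem_erase.mpr ⟨hyz, hy⟩)
          exact Fin.ext (by simp only; rw [Nat.mod_eq_of_lt (by omega)]; omega)
    · intro t ht
      simp only [Finset.mem_coe, pathSets, mem_filter, mem_powerset] at ht
      have hlt : ∀ a ∈ t, a < p - 3 := by
        intro a ha; have := ht.1 ha; simpa using this
      have hznot : z ∉ t.image (fun a : ℕ => (⟨(a + 2) % p, Nat.mod_lt _ (by omega)⟩ : Fin p)) := by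
        simp only [Finset.mem_image, not_exists]
        rintro a ⟨ha, hcomp⟩
        have hla := hlt a ha
        have hv : (a + 2) % p = z.val := congrArg Fin.val hcomp
        rw [Nat.mod_eq_of_lt (by omega)] at hv
        have hzv : z.val = 0 := rfl
        omega
      dsimp only
      rw [Finset.erase_insert hznot]
      ext b
      simp only [Finset.mem_image]
      constructor
      · rintro ⟨x, ⟨a, ha, rfl⟩, rfl⟩
        have := hlt a ha
        simp only
        rwa [Nat.mod_eq_of_lt (by omega), Nat.add_sub_cancel]
      · intro hb
        have := hlt b hb
        exact ⟨_, ⟨b, hb, rfl⟩, by simp only; rw [Nat.mod_eq_of_lt (by omega), Nat.add_sub_cancel]⟩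
  rw [hA, hB, pathSets_card, pathSets_card] at hsplit
  have e1 : p - 3 + 1 - m = p - k - 1 := by omega
  have e2 : p - 1 + 1 - k = p - k := by omega
  rw [e1, e2] at hsplit
  have hmul : (p - k) * Nat.choose (p - k - 1) m = Nat.choose (p - k) k * k := by
    have := Nat.add_one_mul_choose_eq (p - k - 1) m
    rw [show p - k - 1 + 1 = p - k by omega] at this
    rw [this]
  have hS : S.card = Nat.choose (p - k - 1) m + Nat.choose (p - k) k := by omega
  rw [hS, Nat.add_mul]
  rw [show Nat.choose (p - k - 1) m * (p - k) = Nat.choose (p - k) k * k from by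
    rw [Nat.mul_comm]; exact hmul]
  rw [← Nat.mul_add, show k + (p - k) = p by omega, Nat.mul_comm]
end

section
/- In a directed path on p vertices (any orientation of the path graph I_p), the set of vertices that are heads of immoralities (i.e., interior vertices v with both incident edges directed into v, where the two tails are non-adjacent) forms an independent set in I_p contained in the interior vertices; conversely, every independent set of interior vertices of I_p arises as the set of immorality heads of some orientation of I_p. Hence the number of Markov equivalence classes with skeleton I_p, counted by placement of immoralities, is the number of independent sets in the path I_{p-2}, which equals the Fibonacci number F_{p-1}. -/
private def pathIndep (n : ℕ) : Finset (Finset ℕ) :=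
  (Finset.range n).powerset.filter (fun s => ∀ i ∈ s, i + 1 ∉ s)

private lemma pathIndep_zero : (pathIndep 0).card = 1 := by
  decide

private lemma pathIndep_one : (pathIndep 1).card = 2 := by
  decide

private lemma pathIndep_rec (n : ℕ) :
    (pathIndep (n + 2)).card = (pathIndep (n + 1)).card + (pathIndep n).card := by
  classical
  rw [← Finset.card_filter_add_card_filter_not
    (p := fun s => n + 1 ∈ s) (s := pathIndep (n + 2)), Nat.add_comm]
  congr 1
  · -- sets not containing n+1 are exactly pathIndep (n+1)
    apply Finset.card_nbij (fun s => s)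
    · intro s hs
      simp only [Finset.mem_coe, Finset.mem_filter, pathIndep, Finset.mem_powerset] at hs ⊢
      obtain ⟨⟨hsub, hind⟩, hmem⟩ := hs
      refine ⟨fun x hx => ?_, hind⟩
      have := hsub hx
      simp only [Finset.mem_range] at this ⊢
      rcases Nat.lt_succ_iff_lt_or_eq.mp this with h | h
      · exact h
      · exact absurd (h ▸ hx) hmem
    · intro s _ t _ h; exact h
    · intro t ht
      simp only [Finset.mem_coe, Finset.mem_filter, pathIndep, Finset.mem_powerset,
        Set.mem_image] at ht ⊢
      obtain ⟨hsub, hind⟩ := ht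
      refine ⟨t, ⟨⟨fun x hx => ?_, hind⟩, fun hmem => ?_⟩, rfl⟩
      · have := hsub hx; simp only [Finset.mem_range] at this ⊢; omega
      · have := hsub hmem; simp only [Finset.mem_range] at this; omega
  · -- sets containing n+1 biject with pathIndep n via erasing n+1
    apply Finset.card_nbij' (fun s => s.erase (n + 1)) (fun t => insert (n + 1) t)
    · intro s hs
      simp only [Finset.mem_coe, Finset.mem_filter, pathIndep, Finset.mem_powerset] at hs ⊢
      obtain ⟨⟨hsub, hind⟩, hmem⟩ := hs
      constructor
      · intro x hx
        simp only [Finset.mem_erase] at hx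
        obtain ⟨hne, hxs⟩ := hx
        have hlt := Finset.mem_range.mp (hsub hxs)
        have hnn : x ≠ n := by
          rintro rfl; exact hind x hxs hmem
        exact Finset.mem_range.mpr (by omega)
      · intro x hx hx1
        simp only [Finset.mem_erase] at hx hx1
        exact hind x hx.2 hx1.2
    · intro t ht
      simp only [Finset.mem_coe, Finset.mem_filter, pathIndep, Finset.mem_powerset] at ht ⊢
      obtain ⟨hsub, hind⟩ := ht
      refine ⟨⟨fun x hx => ?_, fun i hi hi1 => ?_⟩, Finset.mem_insert_self _ _⟩
      · rcases Finset.mem_insert.mp hx with rfl | hx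
        · exact Finset.mem_range.mpr (by omega)
        · have := Finset.mem_range.mp (hsub hx)
          exact Finset.mem_range.mpr (by omega)
      · rcases Finset.mem_insert.mp hi with rfl | hi
        · rcases Finset.mem_insert.mp hi1 with h | h
          · omega
          · have := Finset.mem_range.mp (hsub h); omega
        · have hlt := Finset.mem_range.mp (hsub hi)
          rcases Finset.mem_insert.mp hi1 with h | h
          · omega
          · exact hind i hi h
    · intro s hs
      simp only [Finset.mem_coe, Finset.mem_filter] at hs
      exact Finset.insert_erase hs.2
    · intro t ht
      simp only [Finset.mem_coe, Finset.mem_filter, pathIndep, Finset.mem_powerset] at ht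
      apply Finset.erase_insert
      intro hmem
      have := Finset.mem_range.mp (ht.1 hmem); omega

private lemma pathIndep_card (n : ℕ) : (pathIndep n).card = Nat.fib (n + 2) := by
  induction n using Nat.strong_induction_on with
  | _ n ih =>
    match n with
    | 0 => simpa using pathIndep_zero
    | 1 => rw [pathIndep_one]; decide
    | (m + 2) =>
      rw [pathIndep_rec, ih (m + 1) (by omega), ih m (by omega)]
      show Nat.fib (m + 3) + Nat.fib (m + 2) = Nat.fib (m + 4)
      rw [show Nat.fib (m + 4) = Nat.fib (m + 2) + Nat.fib (m + 3) from Nat.fib_add_two]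
      omega

private lemma finIndep_card (n : ℕ) :
    ((Finset.univ : Finset (Finset (Fin n))).filter
        (fun s => ∀ i ∈ s, ∀ j ∈ s, i.val + 1 ≠ j.val)).card = Nat.fib (n + 2) := by
  classical
  rw [← pathIndep_card]
  apply Finset.card_nbij (fun s => s.image Fin.val)
  · intro s hs
    simp only [Finset.mem_coe, Finset.mem_filter, Finset.mem_univ, true_and] at hs
    simp only [Finset.mem_coe, pathIndep, Finset.mem_filter, Finset.mem_powerset]
    constructor
    · intro x hx
      simp only [Finset.mem_image] at hx
      obtain ⟨i, _, rfl⟩ := hx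
      exact Finset.mem_range.mpr i.isLt
    · intro x hx hx1
      simp only [Finset.mem_image] at hx hx1
      obtain ⟨i, hi, rfl⟩ := hx
      obtain ⟨j, hj, hij⟩ := hx1
      exact hs i hi j hj hij.symm
  · intro s _ t _ h
    exact Finset.image_injective Fin.val_injective h
  · intro t ht
    simp only [Finset.mem_coe, pathIndep, Finset.mem_filter, Finset.mem_powerset] at ht
    obtain ⟨hsub, hind⟩ := ht
    refine ⟨t.attachFin (fun m hm => Finset.mem_range.mp (hsub hm)), ?_, ?_⟩
    · simp only [Finset.mem_coe, Finset.mem_filter, Finset.mem_univ, true_and]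
      intro i hi j hj hij
      rw [Finset.mem_attachFin] at hi hj
      exact hind i.val hi (hij ▸ hj)
    · ext x
      simp only [Finset.mem_image, Finset.mem_attachFin]
      constructor
      · rintro ⟨i, hi, rfl⟩; exact hi
      · intro hx
        exact ⟨⟨x, Finset.mem_range.mp (hsub hx)⟩, hx, rfl⟩

/-- Orientations of the path `I_p` on vertices `0, …, p-1` are encoded by
`d : ℕ → Bool`, where `d i = true` means the edge `{i, i+1}` is directed `i → i+1`
(only `i < p - 1` is relevant). An interior vertex `j` (`1 ≤ j ≤ p-2`) is the head of
an immorality iff `d (j-1) = true` and `d j = false`.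
(1) The set of immorality heads is an independent set of interior vertices of `I_p`;
(2) every independent set of interior vertices arises as the set of immorality heads
of some orientation; hence
(3) the number of Markov equivalence classes with skeleton `I_p` equals the number of
independent sets of the path on `p - 2` vertices, which is the Fibonacci number
`F_{p-1} = Nat.fib p`. -/
theorem stmt8 (p : ℕ) (hp : 2 ≤ p) :
    (∀ d : ℕ → Bool, ∀ j k : ℕ,
        (1 ≤ j ∧ j ≤ p - 2 ∧ d (j - 1) = true ∧ d j = false) →
        (1 ≤ k ∧ k ≤ p - 2 ∧ d (k - 1) = true ∧ d k = false) → j + 1 ≠ k) ∧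
    (∀ S : Finset ℕ, (∀ j ∈ S, 1 ≤ j ∧ j ≤ p - 2) → (∀ j ∈ S, j + 1 ∉ S) →
        ∃ d : ℕ → Bool, ∀ j : ℕ,
          ((1 ≤ j ∧ j ≤ p - 2 ∧ d (j - 1) = true ∧ d j = false) ↔ j ∈ S)) ∧
    ((Finset.univ : Finset (Finset (Fin (p - 2)))).filter
        (fun s => ∀ i ∈ s, ∀ j ∈ s, i.val + 1 ≠ j.val)).card = Nat.fib p := by
  classical
  refine ⟨?_, ?_, ?_⟩
  · rintro d j k ⟨_, _, _, hjf⟩ ⟨_, _, hkt, _⟩ heq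
    have : k - 1 = j := by omega
    rw [this] at hkt
    rw [hkt] at hjf
    simp at hjf
  · intro S hbound hind
    refine ⟨fun i => decide (i + 1 ∈ S), fun j => ?_⟩
    constructor
    · rintro ⟨hj1, _, ht, hf⟩
      have h : j - 1 + 1 = j := by omega
      simp only [decide_eq_true_eq] at ht
      rwa [h] at ht
    · intro hj
      obtain ⟨hj1, hj2⟩ := hbound j hj
      refine ⟨hj1, hj2, ?_, ?_⟩
      · have h : j - 1 + 1 = j := by omega
        simp only [decide_eq_true_eq, h]
        exact hj
      · simp only [decide_eq_false_iff_not]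
        exact hind j hj
  · rw [finIndep_card]
    congr 1
    omega
end

section
/- The number of Markov equivalence classes of orientations of the star graph G_1(p) (one center joined to p ≥ 2 leaves) is 2^p - p. More precisely: every orientation of the star with at least two edges directed into the center forms a singleton class determined by the set of inward-directed edges (2^p - p - 1 such classes), and all p+1 orientations with at most one edge directed into the center form a single class. -/
/-- An orientation of the star with center `c` and `p` leaves is encoded by
`f : Fin p → Bool`, with `f i = true` meaning the edge at leaf `i` is directed into
the center.  `inward f` is the set of inward-directed edges. -/
def inward {p : ℕ} (f : Fin p → Bool) : Finset (Fin p) :=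
  Finset.univ.filter (fun i => f i = true)

def toFun' {p : ℕ} (s : Finset (Fin p)) : Fin p → Bool := fun i => decide (i ∈ s)

lemma inward_toFun' {p : ℕ} (s : Finset (Fin p)) : inward (toFun' s) = s := by
  ext i; simp [inward, toFun']

lemma toFun'_inward {p : ℕ} (f : Fin p → Bool) : toFun' (inward f) = f := by
  funext i; simp [inward, toFun']

lemma card_filter_inward {p : ℕ} (P : Finset (Fin p) → Prop) [DecidablePred P] :
    (Finset.univ.filter (fun f : Fin p → Bool => P (inward f))).card =
      (Finset.univ.filter P).card := by
  apply Finset.card_bij' (fun f _ => inward f) (fun s _ => toFun' s)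
  · intro f hf; simp only [Finset.mem_filter] at hf ⊢; exact ⟨Finset.mem_univ _, hf.2⟩
  · intro s hs; simp only [Finset.mem_filter] at hs ⊢
    exact ⟨Finset.mem_univ _, by rw [inward_toFun']; exact hs.2⟩
  · intro f _; exact toFun'_inward f
  · intro s _; exact inward_toFun' s

lemma card_le_one {p : ℕ} :
    ((Finset.univ : Finset (Finset (Fin p))).filter (fun s => s.card ≤ 1)).card = p + 1 := by
  have h : (Finset.univ : Finset (Finset (Fin p))).filter (fun s => s.card ≤ 1) =
      insert ∅ (Finset.univ.image (fun a : Fin p => ({a} : Finset (Fin p)))) := by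
    ext s
    simp only [Finset.mem_filter, Finset.mem_univ, true_and, Finset.mem_insert,
      Finset.mem_image]
    constructor
    · intro h
      interval_cases h' : s.card
      · exact Or.inl (Finset.card_eq_zero.mp h')
      · rcases Finset.card_eq_one.mp h' with ⟨a, ha⟩
        exact Or.inr ⟨a, ha.symm⟩
    · rintro (rfl | ⟨a, rfl⟩) <;> simp
  rw [h, Finset.card_insert_of_notMem, Finset.card_image_of_injective _ Finset.singleton_injective]
  · simp [Nat.add_comm]
  · simp only [Finset.mem_image]
    rintro ⟨a, -, ha⟩
    exact (Finset.singleton_ne_empty a) ha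

lemma card_ge_two {p : ℕ} :
    ((Finset.univ : Finset (Finset (Fin p))).filter (fun s => 2 ≤ s.card)).card =
      2 ^ p - p - 1 := by
  have h2 : ((Finset.univ : Finset (Finset (Fin p))).filter (fun s => 2 ≤ s.card)) =
      Finset.univ \ (Finset.univ.filter (fun s => s.card ≤ 1)) := by
    ext s; simp; omega
  rw [h2, Finset.card_sdiff_of_subset (Finset.filter_subset _ _), card_le_one]
  simp [Fintype.card_finset]
  omega

/-- Markov equivalence for orientations of the star: same set of immoralities,
i.e. either the same set of (at least two) inward edges, or both have at most one
inward edge (no immoralities). -/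
def starMEC (p : ℕ) (f g : Fin p → Bool) : Prop :=
  inward f = inward g ∨ ((inward f).card ≤ 1 ∧ (inward g).card ≤ 1)

instance (p : ℕ) : DecidableRel (starMEC p) := fun f g => by
  unfold starMEC; infer_instance


/-- `starMEC p` is an equivalence relation on orientations of the star. -/
def starSetoid (p : ℕ) : Setoid (Fin p → Bool) where
  r := starMEC p
  iseqv := by
    constructor
    · intro f; exact Or.inl rfl
    · intro f g h
      rcases h with h | h
      · exact Or.inl h.symm
      · exact Or.inr ⟨h.2, h.1⟩
    · intro f g h hfg hgh
      rcases hfg with hfg | hfg <;> rcases hgh with hgh | hgh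
      · exact Or.inl (hfg.trans hgh)
      · exact Or.inr ⟨hfg ▸ hgh.1, hgh.2⟩
      · exact Or.inr ⟨hfg.1, hgh ▸ hfg.2⟩
      · exact Or.inr ⟨hfg.1, hgh.2⟩

/-- The number of Markov equivalence classes of orientations of the star `G_1(p)`
(`p ≥ 2` leaves) is `2^p - p`.  More precisely, there are `2^p - p - 1` orientations
with at least two inward edges (each a singleton class determined by its inward set),
and the `p + 1` orientations with at most one inward edge form a single class. -/
instance (p : ℕ) : DecidableRel ((starSetoid p).r) :=
  fun f g => (inferInstance : Decidable (starMEC p f g))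

instance (p : ℕ) : Fintype (Quotient (starSetoid p)) :=
  @Quotient.fintype _ _ (starSetoid p) (fun f g => (inferInstance : Decidable (starMEC p f g)))

def starPhi {p : ℕ} (f : Fin p → Bool) : Option (Finset (Fin p)) :=
  if 2 ≤ (inward f).card then some (inward f) else none

lemma starPhi_const {p : ℕ} (f g : Fin p → Bool) (h : starMEC p f g) :
    starPhi f = starPhi g := by
  rcases h with h | ⟨h1, h2⟩
  · simp [starPhi, h]
  · have hf : ¬ 2 ≤ (inward f).card := by omega
    have hg : ¬ 2 ≤ (inward g).card := by omega
    simp [starPhi, hf, hg]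

lemma card_quot (p : ℕ) :
    Fintype.card (Quotient (starSetoid p)) = 2 ^ p - p := by
  classical
  set Φ : Quotient (starSetoid p) → Option (Finset (Fin p)) :=
    Quotient.lift starPhi (fun f g h => starPhi_const f g h) with hΦ
  have hinj : Function.Injective Φ := by
    intro a b hab
    induction a using Quotient.inductionOn with | _ f =>
    induction b using Quotient.inductionOn with | _ g =>
    apply Quotient.sound
    simp only [hΦ, Quotient.lift_mk, starPhi] at hab
    by_cases hf : 2 ≤ (inward f).card <;> by_cases hg : 2 ≤ (inward g).card <;>
      simp [hf, hg] at hab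
    · exact Or.inl hab
    · exact Or.inr ⟨by omega, by omega⟩
  have h1 : Fintype.card (Quotient (starSetoid p)) = (Finset.univ.image Φ).card := by
    rw [Finset.card_image_of_injective _ hinj, Finset.card_univ]
  have h2 : (Finset.univ : Finset (Quotient (starSetoid p))).image Φ =
      Finset.univ.image (starPhi (p := p)) := by
    have : (Finset.univ : Finset (Quotient (starSetoid p))) =
        Finset.univ.image (Quotient.mk (starSetoid p)) :=
      (Finset.image_univ_of_surjective (fun q => Quotient.exists_rep q)).symm
    rw [this, Finset.image_image]
    rfl
  have h3 : (Finset.univ : Finset (Fin p → Bool)).image starPhi =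
      insert none ((Finset.univ.filter (fun s : Finset (Fin p) => 2 ≤ s.card)).image some) := by
    ext o
    simp only [Finset.mem_image, Finset.mem_univ, true_and, Finset.mem_insert,
      Finset.mem_filter]
    constructor
    · rintro ⟨f, rfl⟩
      by_cases hf : 2 ≤ (inward f).card
      · exact Or.inr ⟨inward f, hf, by simp [starPhi, hf]⟩
      · exact Or.inl (by simp [starPhi, hf])
    · rintro (rfl | ⟨s, hs, rfl⟩)
      · refine ⟨fun _ => false, ?_⟩
        have : inward (fun _ : Fin p => false) = ∅ := by ext i; simp [inward]
        simp [starPhi, this]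
      · exact ⟨toFun' s, by simp [starPhi, inward_toFun', hs]⟩
  have hnone : (none : Option (Finset (Fin p))) ∉
      (Finset.univ.filter (fun s : Finset (Fin p) => 2 ≤ s.card)).image some := by
    simp
  have hlt := Nat.lt_two_pow_self (n := p)
  rw [h1, h2, h3, Finset.card_insert_of_notMem hnone,
    Finset.card_image_of_injective _ (Option.some_injective _), card_ge_two]
  omega

theorem stmt11 (p : ℕ) (hp : 2 ≤ p) :
    Fintype.card (Quotient (starSetoid p)) = 2 ^ p - p ∧
    (Finset.univ.filter (fun f : Fin p → Bool => 2 ≤ (inward f).card)).card =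
      2 ^ p - p - 1 ∧
    (Finset.univ.filter (fun f : Fin p → Bool => (inward f).card ≤ 1)).card = p + 1 ∧
    (∀ f g : Fin p → Bool, 2 ≤ (inward f).card → (starMEC p f g ↔ inward f = inward g)) ∧
    (∀ f g : Fin p → Bool, (inward f).card ≤ 1 → (inward g).card ≤ 1 → starMEC p f g) := by
  refine ⟨card_quot p, ?_, ?_, ?_, ?_⟩
  · exact (card_filter_inward (fun s => 2 ≤ s.card)).trans card_ge_two
  · exact (card_filter_inward (fun s => s.card ≤ 1)).trans card_le_one
  · intro f g hf
    constructor
    · rintro (h | ⟨h1, -⟩)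
      · exact h
      · omega
    · exact Or.inl
  · intro f g h1 h2; exact Or.inr ⟨h1, h2⟩
end

section
/- An orientation of a tree T has no immoralities (no vertex with two incoming edges) if and only if it is the orientation directed away from some vertex v; consequently the number of immorality-free orientations of a tree on p vertices is exactly p. -/
/-- An orientation of a graph `G`, encoded as `D : V → V → Bool` with `D a b = true`
meaning the edge `{a,b}` is directed `a → b`. -/
def IsOrientation {V : Type*} (G : SimpleGraph V) (D : V → V → Bool) : Prop :=
  (∀ a b, D a b = true → G.Adj a b) ∧ (∀ a b, G.Adj a b → D a b = !D b a)

/-- The indegree of `v` in the orientation `D`. -/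
def indeg {V : Type*} [Fintype V] (D : V → V → Bool) (v : V) : ℕ :=
  (Finset.univ.filter (fun u => D u v = true)).card

instance {V : Type*} [Fintype V] [DecidableEq V] (G : SimpleGraph V)
    [DecidableRel G.Adj] (D : V → V → Bool) : Decidable (IsOrientation G D) := by
  unfold IsOrientation; infer_instance

open Finset SimpleGraph

set_option linter.unusedSectionVars false

section aux
variable {V : Type*} [Fintype V] [DecidableEq V] {G : SimpleGraph V} [DecidableRel G.Adj]

lemma aux_dist_ne (hT : G.IsTree) (v : V) {a b : V} (hab : G.Adj a b) :
    G.dist v a ≠ G.dist v b := by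
  intro h
  have hc := hT.isConnected
  rcases Nat.eq_zero_or_pos (G.dist v a) with h0 | hpos
  · have ha : v = a := (hc.dist_eq_zero_iff).mp h0
    have hb : v = b := (hc.dist_eq_zero_iff).mp (h ▸ h0)
    exact hab.ne (ha ▸ hb)
  · obtain ⟨qa, hqa, hqal⟩ := hc.exists_path_of_dist v a
    obtain ⟨qb, hqb, hqbl⟩ := hc.exists_path_of_dist v b
    have hbmem : b ∉ qa.support := by
      intro hmem
      have h1 : G.dist v b ≤ (qa.takeUntil b hmem).length := dist_le _
      have h2 := congrArg Walk.length (qa.take_spec hmem)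
      rw [Walk.length_append] at h2
      have h3 : (qa.dropUntil b hmem).length = 0 := by omega
      exact hab.ne (Walk.eq_of_length_eq_zero h3).symm
    have hp2 : (Walk.cons hab.symm qa.reverse).IsPath :=
      hqa.reverse.cons (by rwa [Walk.support_reverse, List.mem_reverse])
    have := (hT.existsUnique_path b v).unique hp2 hqb.reverse
    have := congrArg Walk.length this
    simp [Walk.length_reverse] at this
    omega

lemma aux_dist_step (hT : G.IsTree) (v : V) {a b : V} (hab : G.Adj a b) :
    G.dist v b ≤ G.dist v a + 1 := by
  have h1 := hT.isConnected.dist_triangle (u := v) (v := a) (w := b)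
  rw [dist_eq_one_iff_adj.mpr hab] at h1
  exact h1

lemma aux_parent (hT : G.IsTree) {v w : V} (hvw : w ≠ v) :
    ∃ u, G.Adj u w ∧ G.dist v w = G.dist v u + 1 := by
  have hc := hT.isConnected
  have hd : 0 < G.dist v w := hc.pos_dist_of_ne (Ne.symm hvw)
  obtain ⟨q, hq, hql⟩ := hc.exists_path_of_dist v w
  cases hqr : q.reverse with
  | nil =>
    have h0 : q.length = 0 := by
      have := congrArg Walk.length hqr
      simpa [Walk.length_reverse] using this
    omega
  | @cons _ u _ h p =>
    have hlen : p.length + 1 = G.dist v w := by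
      have := congrArg Walk.length hqr
      rw [Walk.length_reverse] at this
      simpa [hql] using this.symm
    have h1 : G.dist v u ≤ p.length := by
      have := dist_le p.reverse
      rwa [Walk.length_reverse] at this
    have h2 : G.dist v w ≤ G.dist v u + 1 := aux_dist_step hT v h.symm
    exact ⟨u, h.symm, by omega⟩

lemma aux_parent_unique (hT : G.IsTree) {v w u1 u2 : V}
    (h1 : G.Adj u1 w ∧ G.dist v w = G.dist v u1 + 1)
    (h2 : G.Adj u2 w ∧ G.dist v w = G.dist v u2 + 1) : u1 = u2 := by
  have hc := hT.isConnected
  have key : ∀ u : V, ∀ (hu : G.Adj u w ∧ G.dist v w = G.dist v u + 1),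
      ∃ (q : G.Walk v u) (hq : (Walk.cons hu.1.symm q.reverse).IsPath), True := by
    intro u hu
    obtain ⟨q, hq, hql⟩ := hc.exists_path_of_dist v u
    have hwmem : w ∉ q.support := by
      intro hmem
      have hle : G.dist v w ≤ (q.takeUntil w hmem).length := dist_le _
      have hle2 := q.length_takeUntil_le hmem
      omega
    exact ⟨q, hq.reverse.cons (by rwa [Walk.support_reverse, List.mem_reverse]), trivial⟩
  obtain ⟨q1, hq1, -⟩ := key u1 h1
  obtain ⟨q2, hq2, -⟩ := key u2 h2
  have heq := (hT.existsUnique_path w v).unique hq1 hq2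
  have := congrArg (fun p => p.getVert 1) heq
  simpa [Walk.getVert_cons_succ, Walk.getVert_zero] using this

/-- the orientation away from `v` -/
noncomputable def away (G : SimpleGraph V) [DecidableRel G.Adj] (v a b : V) : Bool :=
  decide (G.Adj a b ∧ G.dist v b = G.dist v a + 1)

lemma away_isOrientation (hT : G.IsTree) (v : V) : IsOrientation G (away G v) := by
  constructor
  · intro a b h
    exact (of_decide_eq_true h).1
  · intro a b hab
    have hne := aux_dist_ne hT v hab
    have hs1 := aux_dist_step hT v hab
    have hs2 := aux_dist_step hT v hab.symm
    by_cases h : G.dist v b = G.dist v a + 1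
    · simp [away, hab, hab.symm, h]; omega
    · have h' : G.dist v a = G.dist v b + 1 := by omega
      simp [away, hab, hab.symm, h, h']; omega

lemma away_indeg_le (hT : G.IsTree) (v w : V) : indeg (away G v) w ≤ 1 := by
  apply Finset.card_le_one.mpr
  intro a ha b hb
  simp only [mem_filter, mem_univ, true_and, away, decide_eq_true_eq] at ha hb
  exact aux_parent_unique hT ha hb

lemma away_indeg_root (v : V) : indeg (away G v) v = 0 := by
  rw [indeg, Finset.card_eq_zero, Finset.filter_eq_empty_iff]
  intro u _
  simp only [away, decide_eq_true_eq, not_and]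
  intro _
  simp [SimpleGraph.dist_self]

lemma away_indeg_one (hT : G.IsTree) {v w : V} (h : w ≠ v) : indeg (away G v) w = 1 := by
  refine le_antisymm (away_indeg_le hT v w) ?_
  obtain ⟨u, hu1, hu2⟩ := aux_parent hT h
  rw [indeg, Nat.one_le_iff_ne_zero, ← Nat.pos_iff_ne_zero, Finset.card_pos]
  refine ⟨u, ?_⟩
  simp only [Finset.mem_filter, Finset.mem_univ, true_and, away, decide_eq_true_eq]
  exact ⟨hu1, hu2⟩

lemma aux_sum_indeg (hT : G.IsTree) {D : V → V → Bool} (hD : IsOrientation G D) :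
    ∑ v, indeg D v = Fintype.card V - 1 := by
  classical
  have h1 : ∑ v, indeg D v = (Finset.univ.filter fun p : V × V => D p.2 p.1 = true).card := by
    rw [Finset.card_filter, Fintype.sum_prod_type]
    refine Finset.sum_congr rfl fun v _ => ?_
    rw [indeg, Finset.card_filter]
  rw [h1, ← hT.card_edgeFinset]
  apply Finset.card_bij (fun p _ => s(p.2, p.1))
  · intro p hp
    simp only [mem_filter] at hp
    simp [mem_edgeFinset, hD.1 _ _ hp.2]
  · intro p hp q hq hpq
    simp only [mem_filter, mem_univ, true_and] at hp hq
    rw [Sym2.eq_iff] at hpq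
    rcases hpq with ⟨h1', h2'⟩ | ⟨h1', h2'⟩
    · exact Prod.ext h2' h1'
    · exfalso
      have hadj : G.Adj p.2 p.1 := hD.1 _ _ hp
      have h3 := hD.2 p.2 p.1 hadj
      rw [hp] at h3
      have h4 : D p.1 p.2 = true := by rw [h2', h1']; exact hq
      rw [h4] at h3
      simp at h3
  · intro e he
    rw [mem_edgeFinset] at he
    induction e with
    | h x y =>
      have hadj : G.Adj x y := he
      have := hD.2 x y hadj
      cases hxy : D x y with
      | true => exact ⟨(y, x), by simpa using hxy, rfl⟩
      | false =>
        rw [hxy] at this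
        have : D y x = true := by simpa using this.symm
        exact ⟨(x, y), by simpa using this, Sym2.eq_swap⟩

lemma aux_exists_root (hT : G.IsTree) {D : V → V → Bool} (hD : IsOrientation G D)
    (hle : ∀ v, indeg D v ≤ 1) : ∃ v, indeg D v = 0 := by
  by_contra h
  push_neg at h
  have h1 : ∀ v, indeg D v = 1 := fun v => le_antisymm (hle v) (Nat.one_le_iff_ne_zero.mpr (h v))
  have h2 := aux_sum_indeg hT hD
  rw [Finset.sum_congr rfl (fun v _ => h1 v)] at h2
  simp at h2
  have : 0 < Fintype.card V := Fintype.card_pos_iff.mpr hT.isConnected.nonempty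
  omega

lemma aux_eq_away (hT : G.IsTree) {D : V → V → Bool} (hD : IsOrientation G D)
    (hle : ∀ w, indeg D w ≤ 1) {v : V} (hv : indeg D v = 0) : D = away G v := by
  have hc := hT.isConnected
  have C : ∀ d a b, G.dist v a = d → G.Adj a b → G.dist v b = d + 1 → D b a = false := by
    intro d
    induction d using Nat.strong_induction_on with
    | _ d IH =>
      intro a b hda hab hdb
      by_contra hba'
      have hba : D b a = true := by simpa using hba'
      rcases Nat.eq_zero_or_pos d with h0 | hpos
      · subst h0
        have hav : v = a := hc.dist_eq_zero_iff.mp hda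
        subst hav
        have : b ∈ Finset.univ.filter (fun u => D u v = true) := by simp [hba]
        have := Finset.card_pos.mpr ⟨b, this⟩
        rw [indeg] at hv; omega
      · have hav : a ≠ v := by
          intro h; subst h; rw [SimpleGraph.dist_self] at hda; omega
        obtain ⟨u, hu1, hu2⟩ := aux_parent hT hav
        cases hua : D u a with
        | true =>
          have hbu : b ≠ u := by
            intro h; subst h
            rw [hda] at hu2; rw [hdb] at hu2; omega
          have hsub : {u, b} ⊆ Finset.univ.filter (fun x => D x a = true) := by
            intro x hx
            rcases Finset.mem_insert.mp hx with h | h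
            · subst h; simp [hua]
            · rw [Finset.mem_singleton] at h; subst h; simp [hba]
          have h2 : 2 ≤ indeg D a := by
            rw [indeg]
            calc 2 = ({u, b} : Finset V).card := (Finset.card_pair (Ne.symm hbu)).symm
            _ ≤ _ := Finset.card_le_card hsub
          have := hle a; omega
        | false =>
          have hau : D a u = true := by
            have := hD.2 u a hu1
            rw [hua] at this
            simpa using this.symm
          have hlt : G.dist v u < d := by rw [hda] at hu2; omega
          have := IH (G.dist v u) hlt u a rfl hu1 (by rw [hda] at hu2 ⊢; omega)
          rw [hau] at this; exact absurd this (by simp)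
  funext a b
  by_cases hab : G.Adj a b
  · have hne := aux_dist_ne hT v hab
    have hs1 := aux_dist_step hT v hab
    have hs2 := aux_dist_step hT v hab.symm
    by_cases hb : G.dist v b = G.dist v a + 1
    · have hDba : D b a = false := C (G.dist v a) a b rfl hab hb
      have : D a b = true := by
        have := hD.2 a b hab; rw [hDba] at this; simpa using this
      rw [this]
      simp [away, hab, hb]
    · have ha : G.dist v a = G.dist v b + 1 := by omega
      have hDab : D a b = false := C (G.dist v b) b a rfl hab.symm ha
      rw [hDab]
      simp [away, hb]
  · have : D a b = false := by
      cases h : D a b with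
      | false => rfl
      | true => exact absurd (hD.1 a b h) hab
    rw [this]
    simp [away, hab]

end aux

/-- An orientation of a tree `T` has no immoralities (no vertex of indegree ≥ 2) iff
it is directed away from some vertex `v` (equivalently, every vertex other than `v`
has indegree exactly `1`); consequently the number of immorality-free orientations of
a tree on `p` vertices is exactly `p`. -/
theorem stmt14 {V : Type*} [Fintype V] [DecidableEq V] (G : SimpleGraph V)
    [DecidableRel G.Adj] (hT : G.IsTree) :
    (∀ D : V → V → Bool, IsOrientation G D →
        ((∀ v, indeg D v ≤ 1) ↔ ∃ v, ∀ u, u ≠ v → indeg D u = 1)) ∧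
    Fintype.card {D : V → V → Bool // IsOrientation G D ∧ ∀ v, indeg D v ≤ 1} =
      Fintype.card V := by
  constructor
  · intro D hD
    constructor
    · intro hle
      obtain ⟨v, hv⟩ := aux_exists_root hT hD hle
      refine ⟨v, fun u hu => ?_⟩
      refine le_antisymm (hle u) (Nat.one_le_iff_ne_zero.mpr ?_)
      intro h0
      have hsum := aux_sum_indeg hT hD
      have hcard : 2 ≤ Fintype.card V := Fintype.one_lt_card_iff_nontrivial.mpr ⟨⟨u, v, hu⟩⟩
      have hsub : ({u, v} : Finset V) ⊆ univ := subset_univ _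
      rw [← Finset.sum_sdiff hsub] at hsum
      have h2 : ∑ x ∈ ({u, v} : Finset V), indeg D x = 0 := by
        rw [Finset.sum_pair hu]; omega
      have h3 : ∑ x ∈ univ \ ({u, v} : Finset V), indeg D x ≤
          (univ \ ({u, v} : Finset V)).card := by
        calc ∑ x ∈ univ \ ({u, v} : Finset V), indeg D x
            ≤ ∑ _x ∈ univ \ ({u, v} : Finset V), 1 :=
              Finset.sum_le_sum (fun x _ => hle x)
          _ = _ := by rw [Finset.sum_const, smul_eq_mul, mul_one]
      have h4 : (univ \ ({u, v} : Finset V)).card = Fintype.card V - 2 := by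
        rw [Finset.card_sdiff_of_subset hsub, Finset.card_pair hu, Finset.card_univ]
      omega
    · rintro ⟨v, hv⟩ w
      by_cases hw : w = v
      · subst hw
        have hsum := aux_sum_indeg hT hD
        rw [← Finset.add_sum_erase _ _ (Finset.mem_univ w)] at hsum
        have h2 : ∑ x ∈ univ.erase w, indeg D x = Fintype.card V - 1 := by
          rw [Finset.sum_congr rfl (fun x hx => hv x (Finset.mem_erase.mp hx).1),
            Finset.sum_const, smul_eq_mul, mul_one,
            Finset.card_erase_of_mem (Finset.mem_univ w), Finset.card_univ]
        omega
      · rw [hv w hw]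
  · have hbij : Function.Bijective
        (fun v : V => (⟨away G v, away_isOrientation hT v, away_indeg_le hT v⟩ :
          {D : V → V → Bool // IsOrientation G D ∧ ∀ v, indeg D v ≤ 1})) := by
      constructor
      · intro v w hvw
        by_contra hne
        have h1 : indeg (away G v) v = 0 := away_indeg_root v
        have h2 : indeg (away G w) v = 1 := away_indeg_one hT hne
        have h3 : away G v = away G w := congrArg Subtype.val hvw
        rw [h3] at h1
        omega
      · rintro ⟨D, hD, hle⟩
        obtain ⟨v, hv⟩ := aux_exists_root hT hD hle
        exact ⟨v, Subtype.ext (aux_eq_away hT hD hle hv).symm⟩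
    exact (Fintype.card_of_bijective hbij).symm
end

section
/- For any tree T on p ≥ 1 vertices, the number of Markov equivalence classes of orientations of T satisfies F_{p-1} ≤ M(T) ≤ 2^{p-1} - p + 1, where two orientations are equivalent iff they have the same multiset of immoralities, F denotes Fibonacci numbers with F_0 = F_1 = 1, and both bounds are attained (by the path and the star respectively). -/
set_option linter.unusedSectionVars false
set_option linter.unusedVariables false
set_option maxHeartbeats 1000000


/-- The immorality data of an orientation `D` of `G`: the indicator of those triples
`(i, j, k)` forming an immorality `i → j ← k` (with `i ≠ k` non-adjacent).  Two
orientations of a tree are Markov equivalent iff they have the same immoralities. -/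
def immoralities {V : Type*} [DecidableEq V] (G : SimpleGraph V) [DecidableRel G.Adj]
    (D : V → V → Bool) : V → V → V → Bool :=
  fun i j k => D i j && D k j && decide (i ≠ k) && decide (¬ G.Adj i k)

structure PStruct (V : Type*) where
  r : V
  par : V → V
  dep : V → ℕ
  hdep : ∀ v, v ≠ r → dep (par v) < dep v

namespace PStruct

variable {V : Type*} [Fintype V] [DecidableEq V] (P : PStruct V)

def anc (a b : V) : Prop := Relation.ReflTransGen (fun x y => y ≠ P.r ∧ P.par y = x) a b

open scoped Classical in
noncomputable def desc (v : V) : Finset V := Finset.univ.filter fun i => P.anc v i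

open scoped Classical in
noncomputable def children (j : V) : Finset V := Finset.univ.filter fun c => c ≠ P.r ∧ P.par c = j

lemma mem_desc {v i : V} : i ∈ P.desc v ↔ P.anc v i := by
  classical simp [desc]

lemma mem_children {c j : V} : c ∈ P.children j ↔ (c ≠ P.r ∧ P.par c = j) := by
  classical simp [children]

lemma mem_desc_self (v : V) : v ∈ P.desc v := P.mem_desc.2 .refl

lemma dep_lt_of_mem_children {c j : V} (h : c ∈ P.children j) : P.dep j < P.dep c := by
  obtain ⟨h1, h2⟩ := P.mem_children.1 h
  simpa [h2] using P.hdep c h1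

lemma dep_le_of_anc {a b : V} (h : P.anc a b) : a = b ∨ P.dep a < P.dep b := by
  induction h with
  | refl => exact Or.inl rfl
  | @tail m i h1 h2 ih =>
    right
    have hm : P.dep m < P.dep i := by
      have := P.hdep i h2.1
      rwa [h2.2] at this
    rcases ih with rfl | h
    · exact hm
    · exact h.trans hm

lemma not_anc_of_dep_le {a b : V} (hab : a ≠ b) (h : P.dep b ≤ P.dep a) : ¬ P.anc a b := by
  intro hanc
  rcases P.dep_le_of_anc hanc with rfl | h'
  · exact hab rfl
  · omega

lemma anc_r_iff {c : V} : P.anc c P.r ↔ c = P.r := by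
  constructor
  · intro h
    rcases h.cases_tail with h | ⟨m, _, hm⟩
    · exact h.symm
    · exact absurd rfl hm.1
  · rintro rfl; exact .refl

lemma anc_trans {a b c : V} (h1 : P.anc a b) (h2 : P.anc b c) : P.anc a c := h1.trans h2

lemma anc_total {a b i : V} (ha : P.anc a i) : ∀ hb : P.anc b i, P.anc a b ∨ P.anc b a := by
  induction ha with
  | refl => intro hb; exact Or.inr hb
  | @tail m i h1 h2 ih =>
    intro hb
    rcases hb.cases_tail with h | ⟨m', h3, h4⟩
    · subst h
      exact Or.inl (h1.tail h2)
    · have hmm : m' = m := by rw [← h2.2, ← h4.2]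
      subst hmm
      exact ih h3

lemma not_anc_of_children {v c : V} (hc : c ∈ P.children v) : ¬ P.anc c v :=
  P.not_anc_of_dep_le (fun h => by simpa [h] using P.dep_lt_of_mem_children hc)
    (le_of_lt (P.dep_lt_of_mem_children hc))

lemma desc_disjoint {v c c' : V} (hc : c ∈ P.children v) (hc' : c' ∈ P.children v)
    (hne : c ≠ c') : Disjoint (P.desc c) (P.desc c') := by
  rw [Finset.disjoint_left]
  intro i hi hi'
  have key : ∀ a b : V, a ∈ P.children v → b ∈ P.children v → a ≠ b → ¬ P.anc a b := by
    intro a b hav hbv hab hanc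
    rcases hanc.cases_tail with h | ⟨m, h3, h4⟩
    · exact hab h.symm
    · have : m = v := by rw [← h4.2, (P.mem_children.1 hbv).2]
      subst this
      exact P.not_anc_of_children hav h3
  rcases P.anc_total (P.mem_desc.1 hi) (P.mem_desc.1 hi') with h | h
  · exact key c c' hc hc' hne h
  · exact key c' c hc' hc hne.symm h

lemma mem_desc_iff_head {v i : V} : i ∈ P.desc v ↔ v = i ∨ ∃ c ∈ P.children v, i ∈ P.desc c := by
  rw [mem_desc]
  constructor
  · intro h
    rcases h.cases_head with h | ⟨c, hc, h2⟩
    · exact Or.inl h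
    · exact Or.inr ⟨c, P.mem_children.2 hc, P.mem_desc.2 h2⟩
  · rintro (rfl | ⟨c, hc, h2⟩)
    · exact .refl
    · exact Relation.ReflTransGen.head (P.mem_children.1 hc) (P.mem_desc.1 h2)

lemma not_mem_biUnion_children (v : V) : v ∉ (P.children v).biUnion P.desc := by
  simp only [Finset.mem_biUnion, not_exists]
  intro c h
  exact P.not_anc_of_children h.1 (P.mem_desc.1 h.2)

lemma desc_eq (v : V) : P.desc v = insert v ((P.children v).biUnion P.desc) := by
  ext i
  rw [mem_desc_iff_head, Finset.mem_insert, Finset.mem_biUnion]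
  constructor
  · rintro (rfl | ⟨c, hc, h⟩); exacts [Or.inl rfl, Or.inr ⟨c, hc, h⟩]
  · rintro (rfl | ⟨c, hc, h⟩); exacts [Or.inl rfl, Or.inr ⟨c, hc, h⟩]

lemma erase_desc (v : V) : (P.desc v).erase v = (P.children v).biUnion P.desc := by
  rw [desc_eq, Finset.erase_insert (P.not_mem_biUnion_children v)]

lemma desc_sub_of_children {v c : V} (hc : c ∈ P.children v) : P.desc c ⊆ (P.desc v).erase v := by
  rw [erase_desc]
  exact Finset.subset_biUnion_of_mem P.desc hc

lemma card_desc_lt_of_children {v c : V} (hc : c ∈ P.children v) :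
    (P.desc c).card < (P.desc v).card := by
  calc (P.desc c).card ≤ ((P.desc v).erase v).card := Finset.card_le_card (P.desc_sub_of_children hc)
  _ < (P.desc v).card := Finset.card_erase_lt_of_mem (P.mem_desc_self v)

lemma children_sub_desc {j : V} : P.children j ⊆ P.desc j := by
  intro c hc
  exact P.mem_desc.2 (Relation.ReflTransGen.single (P.mem_children.1 hc))

lemma desc_sub_desc {v j : V} (hj : j ∈ P.desc v) : P.desc j ⊆ P.desc v := by
  intro i hi
  exact P.mem_desc.2 ((P.mem_desc.1 hj).trans (P.mem_desc.1 hi))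

lemma not_children_of_desc {c j : V} (hj : j ∈ P.desc c) : c ∉ P.children j := by
  intro h
  have h1 : P.dep j < P.dep c := P.dep_lt_of_mem_children h
  rcases P.dep_le_of_anc (P.mem_desc.1 hj) with rfl | h2 <;> omega

lemma desc_r : P.desc P.r = Finset.univ := by
  ext i
  simp only [Finset.mem_univ, iff_true, mem_desc]
  have key : ∀ n : ℕ, ∀ i : V, P.dep i ≤ n → P.anc P.r i := by
    intro n
    induction n with
    | zero =>
      intro i hi
      by_cases h : i = P.r
      · subst h; exact .refl
      · exact absurd (P.hdep i h) (by omega)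
    | succ n ih =>
      intro i hi
      by_cases h : i = P.r
      · subst h; exact .refl
      · have h2 := P.hdep i h
        exact (ih (P.par i) (by omega)).tail ⟨h, rfl⟩
  exact key (P.dep i) i le_rfl

/-! ### Validity and counting -/

def Valid (v : V) (pv : Bool) (S : Finset V) : Prop :=
  ∀ j ∈ P.desc v, (if j = v then pv = true else j ∉ S) ∨ ((P.children j) ∩ S).card ≠ 1

lemma children_sub_erase {v j : V} (hj : j ∈ P.desc v) : P.children j ⊆ (P.desc v).erase v := by
  intro c hc
  rw [Finset.mem_erase]
  refine ⟨?_, P.desc_sub_desc hj (P.children_sub_desc hc)⟩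
  rintro rfl
  exact P.not_children_of_desc hj hc

lemma valid_congr {v : V} {pv : Bool} {S S' : Finset V}
    (h : S ∩ (P.desc v).erase v = S' ∩ (P.desc v).erase v) :
    P.Valid v pv S ↔ P.Valid v pv S' := by
  have hmem : ∀ j ∈ (P.desc v).erase v, (j ∈ S ↔ j ∈ S') := by
    intro j hj
    constructor <;> intro hjs
    · have : j ∈ S' ∩ (P.desc v).erase v := h ▸ Finset.mem_inter.2 ⟨hjs, hj⟩
      exact (Finset.mem_inter.1 this).1
    · have : j ∈ S ∩ (P.desc v).erase v := h.symm ▸ Finset.mem_inter.2 ⟨hjs, hj⟩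
      exact (Finset.mem_inter.1 this).1
  unfold Valid
  apply forall₂_congr
  intro j hj
  have hch : P.children j ∩ S = P.children j ∩ S' := by
    ext c
    simp only [Finset.mem_inter, and_congr_right_iff]
    intro hc
    exact hmem c (P.children_sub_erase hj hc)
  rw [hch]
  by_cases hjv : j = v
  · simp [hjv]
  · have := hmem j (Finset.mem_erase.2 ⟨hjv, hj⟩)
    simp only [if_neg hjv]
    tauto

open scoped Classical in
noncomputable def GF (Q : Finset V) : Finset (Finset V) :=
  ((Q.biUnion P.desc).powerset).filter (fun S => ∀ c ∈ Q, P.Valid c (!decide (c ∈ S)) S)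

open scoped Classical in
noncomputable def qc (Q : Finset V) (pr : ℕ → Prop) : ℕ :=
  ((P.GF Q).filter (fun S => pr ((S ∩ Q).card))).card

open scoped Classical in
noncomputable def Fv (v : V) (pv : Bool) : Finset (Finset V) :=
  (((P.desc v).erase v).powerset).filter (P.Valid v pv)

noncomputable def Xc (v : V) : ℕ := (P.Fv v true).card
noncomputable def Yc (v : V) : ℕ := (P.Fv v false).card

open scoped Classical in
lemma mem_GF {Q : Finset V} {S : Finset V} :
    S ∈ P.GF Q ↔ S ⊆ Q.biUnion P.desc ∧ ∀ c ∈ Q, P.Valid c (!decide (c ∈ S)) S := by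
  simp [GF, Finset.mem_filter, Finset.mem_powerset]

open scoped Classical in
lemma mem_Fv {v : V} {pv : Bool} {S : Finset V} :
    S ∈ P.Fv v pv ↔ S ⊆ (P.desc v).erase v ∧ P.Valid v pv S := by
  simp [Fv, Finset.mem_filter, Finset.mem_powerset]

open scoped Classical in
lemma qc_insert_ge {v : V} {Q : Finset V} {c : V} (hQ : Q ⊆ P.children v)
    (hc : c ∈ P.children v) (hcQ : c ∉ Q) (pr : ℕ → Prop) :
    P.qc Q pr * P.Xc c + P.qc Q (fun k => pr (k + 1)) * P.Yc c ≤ P.qc (insert c Q) pr := by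
  classical
  set blocksQ := Q.biUnion P.desc with hblocksQ
  have hdisj : Disjoint (P.desc c) blocksQ := by
    rw [hblocksQ, Finset.disjoint_biUnion_right]
    intro c' hc'
    exact P.desc_disjoint hc (hQ hc') (fun h => hcQ (h ▸ hc'))
  have hQnotdc : ∀ q ∈ Q, q ∉ P.desc c := by
    intro q hq hqd
    exact (Finset.disjoint_left.1 hdisj) hqd (Finset.mem_biUnion.2 ⟨q, hq, P.mem_desc_self q⟩)
  have hcB : c ∉ blocksQ := fun h => (Finset.disjoint_left.1 hdisj) (P.mem_desc_self c) h
  -- source sets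
  set A1 := ((P.GF Q).filter (fun S => pr ((S ∩ Q).card))) ×ˢ (P.Fv c true) with hA1
  set A2 := ((P.GF Q).filter (fun S => pr ((S ∩ Q).card + 1))) ×ˢ (P.Fv c false) with hA2
  set f1 : Finset V × Finset V → Finset V := fun p => p.1 ∪ p.2 with hf1
  set f2 : Finset V × Finset V → Finset V := fun p => insert c (p.1 ∪ p.2) with hf2
  set TGT := (P.GF (insert c Q)).filter (fun S => pr ((S ∩ insert c Q).card)) with hTGT
  -- facts about members
  have memA1 : ∀ p ∈ A1, p.1 ⊆ blocksQ ∧ (∀ c' ∈ Q, P.Valid c' (!decide (c' ∈ p.1)) p.1) ∧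
      pr ((p.1 ∩ Q).card) ∧ p.2 ⊆ (P.desc c).erase c ∧ P.Valid c true p.2 := by
    intro p hp
    rw [hA1, Finset.mem_product, Finset.mem_filter] at hp
    obtain ⟨⟨h1, h2⟩, h3⟩ := hp
    rw [P.mem_GF] at h1
    rw [P.mem_Fv] at h3
    exact ⟨h1.1, h1.2, h2, h3.1, h3.2⟩
  have memA2 : ∀ p ∈ A2, p.1 ⊆ blocksQ ∧ (∀ c' ∈ Q, P.Valid c' (!decide (c' ∈ p.1)) p.1) ∧
      pr ((p.1 ∩ Q).card + 1) ∧ p.2 ⊆ (P.desc c).erase c ∧ P.Valid c false p.2 := by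
    intro p hp
    rw [hA2, Finset.mem_product, Finset.mem_filter] at hp
    obtain ⟨⟨h1, h2⟩, h3⟩ := hp
    rw [P.mem_GF] at h1
    rw [P.mem_Fv] at h3
    exact ⟨h1.1, h1.2, h2, h3.1, h3.2⟩
  -- generic membership facts for a pair (S₁, T)
  have key : ∀ (S₁ T : Finset V), S₁ ⊆ blocksQ → T ⊆ (P.desc c).erase c →
      (∀ x ∈ T, x ∈ P.desc c) ∧ (∀ x ∈ S₁, x ∉ P.desc c) ∧ c ∉ S₁ ∧ c ∉ T := by
    intro S₁ T hS₁ hT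
    refine ⟨fun x hx => Finset.mem_of_mem_erase (hT hx), ?_, fun h => hcB (hS₁ h), fun h =>
      (Finset.notMem_erase c _) (hT h)⟩
    intro x hx hxd
    exact (Finset.disjoint_left.1 hdisj) hxd (hS₁ hx)
  -- congruence helpers
  have congr1 : ∀ (S₁ T : Finset V) (b : Bool), S₁ ⊆ blocksQ → T ⊆ (P.desc c).erase c →
      P.Valid c b T → P.Valid c b (S₁ ∪ T) := by
    intro S₁ T b hS₁ hT hvT
    obtain ⟨hTd, hS₁d, hcS₁, hcT⟩ := key S₁ T hS₁ hT
    have hcongr : (S₁ ∪ T) ∩ (P.desc c).erase c = T ∩ (P.desc c).erase c := by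
      ext x
      simp only [Finset.mem_inter, Finset.mem_union, Finset.mem_erase]
      constructor
      · rintro ⟨hx1 | hx2, hx3⟩
        · exact absurd hx3.2 (hS₁d _ hx1)
        · exact ⟨hx2, hx3⟩
      · rintro ⟨h1, h2⟩; exact ⟨Or.inr h1, h2⟩
    exact (P.valid_congr hcongr).2 hvT
  have congr2 : ∀ (S₁ T : Finset V) (b : Bool), S₁ ⊆ blocksQ → T ⊆ (P.desc c).erase c →
      P.Valid c b T → P.Valid c b (insert c (S₁ ∪ T)) := by
    intro S₁ T b hS₁ hT hvT
    obtain ⟨hTd, hS₁d, hcS₁, hcT⟩ := key S₁ T hS₁ hT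
    have hcongr : (insert c (S₁ ∪ T)) ∩ (P.desc c).erase c = T ∩ (P.desc c).erase c := by
      ext x
      simp only [Finset.mem_inter, Finset.mem_insert, Finset.mem_union, Finset.mem_erase]
      constructor
      · rintro ⟨rfl | (hx1 | hx2), hx3⟩
        · exact absurd rfl hx3.1
        · exact absurd hx3.2 (hS₁d _ hx1)
        · exact ⟨hx2, hx3⟩
      · rintro ⟨h1, h2⟩; exact ⟨Or.inr (Or.inr h1), h2⟩
    exact (P.valid_congr hcongr).2 hvT
  have congr3 : ∀ (S₁ T : Finset V) (b : Bool) (c' : V), c' ∈ Q → S₁ ⊆ blocksQ →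
      T ⊆ (P.desc c).erase c → P.Valid c' b S₁ →
      P.Valid c' b (S₁ ∪ T) ∧ P.Valid c' b (insert c (S₁ ∪ T)) := by
    intro S₁ T b c' hc'Q hS₁ hT hv1
    obtain ⟨hTd, hS₁d, hcS₁, hcT⟩ := key S₁ T hS₁ hT
    have hdisj' : Disjoint (P.desc c') (P.desc c) :=
      P.desc_disjoint (hQ hc'Q) hc (fun h => hcQ (h ▸ hc'Q))
    have hTnot : ∀ x ∈ T, x ∉ P.desc c' := by
      intro x hx h
      exact (Finset.disjoint_right.1 hdisj') (hTd _ hx) h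
    have hcnot : c ∉ P.desc c' := fun h =>
      (Finset.disjoint_right.1 hdisj') (P.mem_desc_self c) h
    constructor
    · have hcongr : (S₁ ∪ T) ∩ (P.desc c').erase c' = S₁ ∩ (P.desc c').erase c' := by
        ext x
        simp only [Finset.mem_inter, Finset.mem_union, Finset.mem_erase]
        constructor
        · rintro ⟨hx1 | hx2, hx3⟩
          · exact ⟨hx1, hx3⟩
          · exact absurd hx3.2 (hTnot _ hx2)
        · rintro ⟨h1, h2⟩; exact ⟨Or.inl h1, h2⟩
      exact (P.valid_congr hcongr).2 hv1
    · have hcongr : (insert c (S₁ ∪ T)) ∩ (P.desc c').erase c' = S₁ ∩ (P.desc c').erase c' := by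
        ext x
        simp only [Finset.mem_inter, Finset.mem_insert, Finset.mem_union, Finset.mem_erase]
        constructor
        · rintro ⟨rfl | (hx1 | hx2), hx3⟩
          · exact absurd hx3.2 hcnot
          · exact ⟨hx1, hx3⟩
          · exact absurd hx3.2 (hTnot _ hx2)
        · rintro ⟨h1, h2⟩; exact ⟨Or.inr (Or.inl h1), h2⟩
      exact (P.valid_congr hcongr).2 hv1
  -- the "down" map sends A1 into TGT
  have memTGT1 : ∀ p ∈ A1, f1 p ∈ TGT := by
    rintro ⟨S₁, T⟩ hp
    obtain ⟨hS₁, hval1, hpr, hT, hvT⟩ := memA1 _ hp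
    obtain ⟨hTd, hS₁d, hcS₁, hcT⟩ := key S₁ T hS₁ hT
    have hcS : c ∉ S₁ ∪ T := by simp [hcS₁, hcT]
    have hint : (S₁ ∪ T) ∩ insert c Q = S₁ ∩ Q := by
      ext x
      simp only [Finset.mem_inter, Finset.mem_union, Finset.mem_insert]
      constructor
      · rintro ⟨hx1 | hx2, rfl | hxQ⟩
        · exact absurd hx1 hcS₁
        · exact ⟨hx1, hxQ⟩
        · exact absurd hx2 hcT
        · exact absurd (hTd _ hx2) (hQnotdc _ hxQ)
      · rintro ⟨h1, h2⟩; exact ⟨Or.inl h1, Or.inr h2⟩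
    rw [hTGT, Finset.mem_filter, P.mem_GF]
    refine ⟨⟨?_, ?_⟩, by show pr (((S₁ ∪ T) ∩ insert c Q).card); rwa [hint]⟩
    · rw [Finset.biUnion_insert]
      intro x hx
      rcases Finset.mem_union.1 hx with h | h
      · exact Finset.mem_union.2 (Or.inr (hS₁ h))
      · exact Finset.mem_union.2 (Or.inl (hTd _ h))
    · intro c' hc'
      rcases Finset.mem_insert.1 hc' with rfl | hc'Q
      · have hb : (!decide (c' ∈ f1 (S₁, T))) = true := by
          show (!decide (c' ∈ S₁ ∪ T)) = true
          simpa using hcS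
        rw [hb]
        exact congr1 S₁ T true hS₁ hT hvT
      · have hb : (!decide (c' ∈ f1 (S₁, T))) = (!decide (c' ∈ S₁)) := by
          show (!decide (c' ∈ S₁ ∪ T)) = (!decide (c' ∈ S₁))
          have h1 : c' ∉ T := fun h => (hQnotdc c' hc'Q) (hTd _ h)
          by_cases hcc : c' ∈ S₁ <;> simp [hcc, h1]
        rw [hb]
        exact (congr3 S₁ T _ c' hc'Q hS₁ hT (hval1 c' hc'Q)).1
  -- the "up" map sends A2 into TGT
  have memTGT2 : ∀ p ∈ A2, f2 p ∈ TGT := by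
    rintro ⟨S₁, T⟩ hp
    obtain ⟨hS₁, hval1, hpr, hT, hvT⟩ := memA2 _ hp
    obtain ⟨hTd, hS₁d, hcS₁, hcT⟩ := key S₁ T hS₁ hT
    have hint : (insert c (S₁ ∪ T)) ∩ insert c Q = insert c (S₁ ∩ Q) := by
      ext x
      simp only [Finset.mem_inter, Finset.mem_insert, Finset.mem_union]
      constructor
      · rintro ⟨h1, h2⟩
        rcases h2 with rfl | hxQ
        · exact Or.inl rfl
        · rcases h1 with rfl | (h1 | h1)
          · exact Or.inl rfl
          · exact Or.inr ⟨h1, hxQ⟩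
          · exact absurd (hTd _ h1) (hQnotdc _ hxQ)
      · rintro (rfl | ⟨h1, h2⟩)
        · exact ⟨Or.inl rfl, Or.inl rfl⟩
        · exact ⟨Or.inr (Or.inl h1), Or.inr h2⟩
    have hcard : ((insert c (S₁ ∪ T)) ∩ insert c Q).card = (S₁ ∩ Q).card + 1 := by
      rw [hint, Finset.card_insert_of_notMem]
      intro h
      exact hcS₁ (Finset.mem_inter.1 h).1
    rw [hTGT, Finset.mem_filter, P.mem_GF]
    refine ⟨⟨?_, ?_⟩, by show pr (((insert c (S₁ ∪ T)) ∩ insert c Q).card); rwa [hcard]⟩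
    · rw [Finset.biUnion_insert]
      intro x hx
      rcases Finset.mem_insert.1 hx with rfl | hx
      · exact Finset.mem_union.2 (Or.inl (P.mem_desc_self x))
      rcases Finset.mem_union.1 hx with h | h
      · exact Finset.mem_union.2 (Or.inr (hS₁ h))
      · exact Finset.mem_union.2 (Or.inl (hTd _ h))
    · intro c' hc'
      rcases Finset.mem_insert.1 hc' with rfl | hc'Q
      · have hb : (!decide (c' ∈ f2 (S₁, T))) = false := by
          show (!decide (c' ∈ insert c' (S₁ ∪ T))) = false
          simp
        rw [hb]
        exact congr2 S₁ T false hS₁ hT hvT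
      · have hc'c : c' ≠ c := fun h => hcQ (h ▸ hc'Q)
        have hb : (!decide (c' ∈ f2 (S₁, T))) = (!decide (c' ∈ S₁)) := by
          show (!decide (c' ∈ insert c (S₁ ∪ T))) = (!decide (c' ∈ S₁))
          have h1 : c' ∉ T := fun h => (hQnotdc c' hc'Q) (hTd _ h)
          by_cases hcc : c' ∈ S₁ <;> simp [hcc, h1, hc'c]
        rw [hb]
        exact (congr3 S₁ T _ c' hc'Q hS₁ hT (hval1 c' hc'Q)).2
  -- recovery facts for injectivity
  have hrec : ∀ (S₁ T : Finset V), S₁ ⊆ blocksQ → T ⊆ (P.desc c).erase c →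
      ((S₁ ∪ T) ∩ blocksQ = S₁ ∧ (S₁ ∪ T) ∩ ((P.desc c).erase c) = T) := by
    intro S₁ T hS₁ hT
    obtain ⟨hTd, hS₁d, hcS₁, hcT⟩ := key S₁ T hS₁ hT
    have hTB : ∀ x ∈ T, x ∉ blocksQ := by
      intro x hx h
      exact (Finset.disjoint_left.1 hdisj) (hTd _ hx) h
    constructor
    · ext x
      simp only [Finset.mem_inter, Finset.mem_union]
      constructor
      · rintro ⟨hx1 | hx2, hx3⟩
        · exact hx1
        · exact absurd hx3 (hTB _ hx2)
      · intro h; exact ⟨Or.inl h, hS₁ h⟩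
    · ext x
      simp only [Finset.mem_inter, Finset.mem_union]
      constructor
      · rintro ⟨hx1 | hx2, hx3⟩
        · exact absurd (Finset.mem_of_mem_erase hx3) (hS₁d _ hx1)
        · exact hx2
      · intro h; exact ⟨Or.inr h, hT h⟩
  have inj1 : Set.InjOn f1 ↑A1 := by
    intro p hp q hq hpq
    obtain ⟨hpS₁, _, _, hpT, _⟩ := memA1 _ hp
    obtain ⟨hqS₁, _, _, hqT, _⟩ := memA1 _ hq
    obtain ⟨hp1, hp2⟩ := hrec p.1 p.2 hpS₁ hpT
    obtain ⟨hq1, hq2⟩ := hrec q.1 q.2 hqS₁ hqT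
    have hu : p.1 ∪ p.2 = q.1 ∪ q.2 := hpq
    exact Prod.ext (by rw [← hp1, ← hq1, hu]) (by rw [← hp2, ← hq2, hu])
  have inj2 : Set.InjOn f2 ↑A2 := by
    intro p hp q hq hpq
    obtain ⟨hpS₁, _, _, hpT, _⟩ := memA2 _ hp
    obtain ⟨hqS₁, _, _, hqT, _⟩ := memA2 _ hq
    obtain ⟨_, _, hpc1, hpc2⟩ := key p.1 p.2 hpS₁ hpT
    obtain ⟨_, _, hqc1, hqc2⟩ := key q.1 q.2 hqS₁ hqT
    have hpu : c ∉ p.1 ∪ p.2 := by simp [hpc1, hpc2]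
    have hqu : c ∉ q.1 ∪ q.2 := by simp [hqc1, hqc2]
    have hu : p.1 ∪ p.2 = q.1 ∪ q.2 := by
      have h2 : (insert c (p.1 ∪ p.2)).erase c = (insert c (q.1 ∪ q.2)).erase c := by
        have : f2 p = f2 q := hpq
        rw [show f2 p = insert c (p.1 ∪ p.2) from rfl, show f2 q = insert c (q.1 ∪ q.2) from rfl] at this
        rw [this]
      rwa [Finset.erase_insert hpu, Finset.erase_insert hqu] at h2
    obtain ⟨hp1, hp2⟩ := hrec p.1 p.2 hpS₁ hpT
    obtain ⟨hq1, hq2⟩ := hrec q.1 q.2 hqS₁ hqT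
    exact Prod.ext (by rw [← hp1, ← hq1, hu]) (by rw [← hp2, ← hq2, hu])
  have hdisjB : Disjoint (A1.image f1) (A2.image f2) := by
    rw [Finset.disjoint_left]
    intro S h1 h2
    obtain ⟨p, hp, rfl⟩ := Finset.mem_image.1 h1
    obtain ⟨q, hq, heq⟩ := Finset.mem_image.1 h2
    obtain ⟨hpS₁, _, _, hpT, _⟩ := memA1 _ hp
    obtain ⟨_, _, hpc1, hpc2⟩ := key p.1 p.2 hpS₁ hpT
    have hcf1 : c ∉ f1 p := by
      show c ∉ p.1 ∪ p.2
      simp [hpc1, hpc2]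
    have hcf2 : c ∈ f2 q := Finset.mem_insert_self _ _
    rw [heq] at hcf2
    exact hcf1 hcf2
  have hsub : (A1.image f1) ∪ (A2.image f2) ⊆ TGT := by
    intro S hS
    rcases Finset.mem_union.1 hS with h | h
    · obtain ⟨p, hp, rfl⟩ := Finset.mem_image.1 h
      exact memTGT1 p hp
    · obtain ⟨p, hp, rfl⟩ := Finset.mem_image.1 h
      exact memTGT2 p hp
  have hcards : A1.card + A2.card ≤ TGT.card := by
    calc A1.card + A2.card = (A1.image f1).card + (A2.image f2).card := by
          rw [Finset.card_image_of_injOn inj1, Finset.card_image_of_injOn inj2]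
      _ = ((A1.image f1) ∪ (A2.image f2)).card := (Finset.card_union_of_disjoint hdisjB).symm
      _ ≤ TGT.card := Finset.card_le_card hsub
  have hA1card : A1.card = P.qc Q pr * P.Xc c := by
    rw [hA1, Finset.card_product]
    congr 1
  have hA2card : A2.card = P.qc Q (fun k => pr (k + 1)) * P.Yc c := by
    rw [hA2, Finset.card_product]
    congr 1
  have hTGTcard : TGT.card = P.qc (insert c Q) pr := by
    rw [hTGT]
    congr 1
  rw [← hA1card, ← hA2card, ← hTGTcard]
  exact hcards

open scoped Classical in
lemma qc_congr {Q : Finset V} {pr pr' : ℕ → Prop} (h : ∀ k, pr k ↔ pr' k) :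
    P.qc Q pr = P.qc Q pr' := by
  unfold qc
  congr 1
  apply Finset.filter_congr
  intro S _
  simp only [h]

open scoped Classical in
lemma qc_pair_le {Q : Finset V} {pr pr' pr'' : ℕ → Prop} (h1 : ∀ k, ¬(pr k ∧ pr' k))
    (h2 : ∀ k, pr k → pr'' k) (h3 : ∀ k, pr' k → pr'' k) :
    P.qc Q pr + P.qc Q pr' ≤ P.qc Q pr'' := by
  classical
  unfold qc
  rw [← Finset.card_union_of_disjoint]
  · apply Finset.card_le_card
    intro S hS
    rcases Finset.mem_union.1 hS with h | h <;> rw [Finset.mem_filter] at h ⊢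
    · exact ⟨h.1, h2 _ h.2⟩
    · exact ⟨h.1, h3 _ h.2⟩
  · rw [Finset.disjoint_left]
    intro S hS hS'
    rw [Finset.mem_filter] at hS hS'
    exact h1 _ ⟨hS.2, hS'.2⟩

open scoped Classical in
lemma qc_empty_eq_one {pr : ℕ → Prop} (h : pr 0) : P.qc ∅ pr = 1 := by
  classical
  unfold qc GF
  simp [h]

lemma fib_prod (x y : ℕ) : Nat.fib (x + y + 2) ≤ Nat.fib (x + 2) * Nat.fib (y + 2) := by
  have h1 : x + y + 2 = (x + 1) + y + 1 := by ring
  rw [h1, Nat.fib_add]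
  have h2 : Nat.fib (x + 1) ≤ Nat.fib (x + 2) := Nat.fib_mono (by omega)
  calc Nat.fib (x+1) * Nat.fib y + Nat.fib (x+2) * Nat.fib (y+1)
      ≤ Nat.fib (x+2) * Nat.fib y + Nat.fib (x+2) * Nat.fib (y+1) := by
        exact Nat.add_le_add_right (Nat.mul_le_mul_right _ h2) _
    _ = Nat.fib (x+2) * (Nat.fib y + Nat.fib (y+1)) := by ring
    _ = Nat.fib (x+2) * Nat.fib (y+2) := by rw [← Nat.fib_add_two]



open scoped Classical in
lemma qc_le_of_subset {Q : Finset V} {pr : ℕ → Prop} {Z : Finset (Finset V)}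
    (h : ∀ S ∈ P.GF Q, pr ((S ∩ Q).card) → S ∈ Z) : P.qc Q pr ≤ Z.card := by
  unfold qc
  apply Finset.card_le_card
  intro S hS
  rw [Finset.mem_filter] at hS
  exact h S hS.1 hS.2

open scoped Classical in
lemma GF_children_mem_Fv {v : V} {S : Finset V} {pv : Bool}
    (hS : S ∈ P.GF (P.children v)) (hcl : pv = true ∨ (P.children v ∩ S).card ≠ 1) :
    S ∈ P.Fv v pv := by
  rw [P.mem_GF] at hS
  rw [P.mem_Fv]
  obtain ⟨hsub, hval⟩ := hS
  constructor
  · rwa [P.erase_desc]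
  · intro j hj
    by_cases hjv : j = v
    · subst hjv
      rcases hcl with h | h
      · left; simpa using h
      · right; exact h
    · rcases P.mem_desc_iff_head.1 hj with h | ⟨c, hcv, hjc⟩
      · exact absurd h.symm hjv
      · have := hval c hcv j hjc
        rcases this with h | h
        · by_cases hjc' : j = c
          · subst hjc'
            left
            rw [if_neg hjv]
            rw [if_pos rfl] at h
            intro hmem
            simp [hmem] at h
          · left
            rw [if_neg hjv]
            rw [if_neg hjc'] at h
            exact h
        · right; exact h

open scoped Classical in
lemma sum3_le_Xc (v : V) :
    P.qc (P.children v) (fun k => k = 0) + P.qc (P.children v) (fun k => k = 1) +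
      P.qc (P.children v) (fun k => 2 ≤ k) ≤ P.Xc v := by
  classical
  unfold Xc
  have h12 : P.qc (P.children v) (fun k => k = 1) + P.qc (P.children v) (fun k => 2 ≤ k) ≤
      P.qc (P.children v) (fun k => 1 ≤ k) :=
    P.qc_pair_le (fun k => by omega) (fun k h => by omega) (fun k h => by omega)
  have h0 : P.qc (P.children v) (fun k => k = 0) + P.qc (P.children v) (fun k => 1 ≤ k) ≤
      P.qc (P.children v) (fun k => k = 0 ∨ 1 ≤ k) :=
    P.qc_pair_le (fun k => by omega) (fun k h => Or.inl h) (fun k h => Or.inr h)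
  have hall : P.qc (P.children v) (fun k => k = 0 ∨ 1 ≤ k) ≤ (P.Fv v true).card := by
    apply P.qc_le_of_subset
    intro S hS _
    exact P.GF_children_mem_Fv hS (Or.inl rfl)
  omega

open scoped Classical in
lemma sum2_le_Yc (v : V) :
    P.qc (P.children v) (fun k => k = 0) + P.qc (P.children v) (fun k => 2 ≤ k) ≤ P.Yc v := by
  classical
  unfold Yc
  have h1 : P.qc (P.children v) (fun k => k = 0) + P.qc (P.children v) (fun k => 2 ≤ k) ≤
      P.qc (P.children v) (fun k => k = 0 ∨ 2 ≤ k) :=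
    P.qc_pair_le (fun k => by omega) (fun k h => Or.inl h) (fun k h => Or.inr h)
  refine h1.trans ?_
  apply P.qc_le_of_subset
  intro S hS h
  apply P.GF_children_mem_Fv hS
  right
  rw [Finset.inter_comm]
  omega


open scoped Classical in
lemma q_invariants (v : V) (Q : Finset V) (hQ : Q ⊆ P.children v)
    (hch : ∀ c ∈ Q, Nat.fib ((P.desc c).card + 1) ≤ P.Xc c ∧ Nat.fib (P.desc c).card ≤ P.Yc c) :
    1 ≤ P.qc Q (fun k => k = 0) ∧
    Nat.fib ((Q.biUnion P.desc).card + 2) ≤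
      P.qc Q (fun k => k = 0) + P.qc Q (fun k => k = 1) + P.qc Q (fun k => 2 ≤ k) ∧
    Nat.fib ((Q.biUnion P.desc).card + 1) ≤
      P.qc Q (fun k => k = 0) + P.qc Q (fun k => 2 ≤ k) ∧
    Nat.fib ((Q.biUnion P.desc).card) ≤
      P.qc Q (fun k => k = 1) + P.qc Q (fun k => 2 ≤ k) := by
  classical
  induction Q using Finset.induction_on with
  | empty =>
    have h0 : P.qc ∅ (fun k => k = 0) = 1 := P.qc_empty_eq_one rfl
    have h1 : P.qc ∅ (fun k => k = 1) = 0 := by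
      have := P.qc_pair_le (Q := ∅) (pr := fun k => k = 1) (pr' := fun k => k = 0)
        (pr'' := fun k => k = 0 ∨ k = 1) (fun k => by omega) (fun k h => Or.inr h)
        (fun k h => Or.inl h)
      have h2 : P.qc ∅ (fun k => k = 0 ∨ k = 1) = 1 := P.qc_empty_eq_one (Or.inl rfl)
      omega
    have h2 : P.qc ∅ (fun k => 2 ≤ k) = 0 := by
      have := P.qc_pair_le (Q := ∅) (pr := fun k => 2 ≤ k) (pr' := fun k => k = 0)
        (pr'' := fun k => k = 0 ∨ 2 ≤ k) (fun k => by omega) (fun k h => Or.inr h)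
        (fun k h => Or.inl h)
      have h3 : P.qc ∅ (fun k => k = 0 ∨ 2 ≤ k) = 1 := P.qc_empty_eq_one (Or.inl rfl)
      omega
    simp [h0, h1, h2]
  | @insert c Qs hc ih =>
    have hQs : Qs ⊆ P.children v := fun x hx => hQ (Finset.mem_insert_of_mem hx)
    have hcv : c ∈ P.children v := hQ (Finset.mem_insert_self c Qs)
    obtain ⟨I0, I1, I2, I3⟩ := ih hQs (fun c' hc' => hch c' (Finset.mem_insert_of_mem hc'))
    obtain ⟨hXc, hYc⟩ := hch c (Finset.mem_insert_self c Qs)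
    set m := (P.desc c).card with hm
    set M := (Qs.biUnion P.desc).card with hM
    have hm1 : 1 ≤ m := Finset.card_pos.2 ⟨c, P.mem_desc_self c⟩
    -- cardinality of the new block union
    have hdisj : Disjoint (P.desc c) (Qs.biUnion P.desc) := by
      rw [Finset.disjoint_biUnion_right]
      intro c' hc'
      exact P.desc_disjoint hcv (hQs hc') (fun h => hc (h ▸ hc'))
    have hcard : ((insert c Qs).biUnion P.desc).card = m + M := by
      rw [Finset.biUnion_insert, Finset.card_union_of_disjoint hdisj]
    -- master inequalities
    have m0 := P.qc_insert_ge hQs hcv hc (fun k => k = 0)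
    have m1 := P.qc_insert_ge hQs hcv hc (fun k => k = 1)
    have m2 := P.qc_insert_ge hQs hcv hc (fun k => 2 ≤ k)
    have e0 : P.qc Qs (fun k => k + 1 = 0) = 0 := by
      have := P.qc_pair_le (Q := Qs) (pr := fun k => k + 1 = 0) (pr' := fun k => k = k)
        (pr'' := fun k => k = k) (fun k => by omega) (fun k h => by omega) (fun k h => h)
      omega
    have e1 : P.qc Qs (fun k => k + 1 = 1) = P.qc Qs (fun k => k = 0) :=
      P.qc_congr (fun k => by omega)
    have e2 : P.qc Qs (fun k => 2 ≤ k + 1) = P.qc Qs (fun k => 1 ≤ k) :=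
      P.qc_congr (fun k => by omega)
    have e3 : P.qc Qs (fun k => k = 1) + P.qc Qs (fun k => 2 ≤ k) ≤ P.qc Qs (fun k => 1 ≤ k) :=
      P.qc_pair_le (fun k => by omega) (fun k h => by omega) (fun k h => by omega)
    rw [e0] at m0
    rw [e1] at m1
    rw [e2] at m2
    set q0 := P.qc Qs (fun k => k = 0)
    set q1 := P.qc Qs (fun k => k = 1)
    set q2 := P.qc Qs (fun k => 2 ≤ k)
    set r0 := P.qc (insert c Qs) (fun k => k = 0)
    set r1 := P.qc (insert c Qs) (fun k => k = 1)
    set r2 := P.qc (insert c Qs) (fun k => 2 ≤ k)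
    set a := P.Xc c
    set b := P.Yc c
    have m2' : q2 * a + (q1 + q2) * b ≤ r2 :=
      le_trans (Nat.add_le_add_left (Nat.mul_le_mul_right _ e3) _) m2
    have m0' : q0 * a ≤ r0 := by
      have : q0 * a = q0 * a + P.qc Qs (fun k => k + 1 = 0) * b := by rw [e0]; ring
      omega
    have ha1 : 1 ≤ a := le_trans (Nat.one_le_iff_ne_zero.2 (by
      have : 0 < Nat.fib (m + 1) := Nat.fib_pos.2 (by omega)
      omega)) hXc
    refine ⟨?_, ?_, ?_, ?_⟩
    · -- 1 ≤ r0
      have : 1 * 1 ≤ q0 * a := Nat.mul_le_mul I0 ha1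
      omega
    · -- sum of three
      rw [hcard]
      have t1 : Nat.fib (m + M + 2) ≤ Nat.fib (M + 2) * (Nat.fib m + Nat.fib (m + 1)) := by
        rw [← Nat.fib_add_two, Nat.add_comm m M]
        exact fib_prod M m
      have t2 : Nat.fib (M + 2) * (Nat.fib m + Nat.fib (m + 1)) ≤ (q0 + q1 + q2) * (b + a) :=
        Nat.mul_le_mul I1 (Nat.add_le_add hYc hXc)
      have t3 : (q0 + q1 + q2) * (b + a) =
          (q0 * a) + (q1 * a + q0 * b) + (q2 * a + (q1 + q2) * b) := by ring
      calc Nat.fib (m + M + 2) ≤ (q0 + q1 + q2) * (b + a) := t1.trans t2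
        _ = (q0 * a) + (q1 * a + q0 * b) + (q2 * a + (q1 + q2) * b) := t3
        _ ≤ r0 + r1 + r2 := by
            have := Nat.add_le_add (Nat.add_le_add m0' m1) m2'
            omega
    · -- pair (0 or ≥2)
      rw [hcard]
      have t1 : Nat.fib (m + M + 1) = Nat.fib M * Nat.fib m + Nat.fib (M + 1) * Nat.fib (m + 1) := by
        rw [Nat.add_comm m M]
        exact Nat.fib_add M m
      have t2 : Nat.fib M * Nat.fib m + Nat.fib (M + 1) * Nat.fib (m + 1) ≤
          (q1 + q2) * b + (q0 + q2) * a :=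
        Nat.add_le_add (Nat.mul_le_mul I3 hYc) (Nat.mul_le_mul I2 hXc)
      have t3 : (q1 + q2) * b + (q0 + q2) * a = (q0 * a) + (q2 * a + (q1 + q2) * b) := by ring
      calc Nat.fib (m + M + 1) ≤ (q1 + q2) * b + (q0 + q2) * a := t1 ▸ t2
        _ = (q0 * a) + (q2 * a + (q1 + q2) * b) := t3
        _ ≤ r0 + r2 := Nat.add_le_add m0' m2'
    · -- pair (1 or ≥2)
      rw [hcard]
      rcases Nat.eq_zero_or_pos M with hM0 | hMpos
      · rw [hM0]
        have t1 : Nat.fib (m + 0) ≤ q0 * b := by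
          calc Nat.fib (m + 0) = 1 * Nat.fib m := by rw [Nat.add_zero]; ring
            _ ≤ q0 * b := Nat.mul_le_mul I0 hYc
        have t2 : q0 * b ≤ r1 := by
          have : q1 * a + q0 * b ≤ r1 := m1
          omega
        omega
      · obtain ⟨M', hM'⟩ : ∃ M', M = M' + 1 := ⟨M - 1, by omega⟩
        rw [hM']
        have hfM3 : Nat.fib M ≤ q1 + q2 := I3
        rw [hM'] at hfM3 I1
        have t1 : Nat.fib (m + (M' + 1)) =
            Nat.fib M' * Nat.fib m + Nat.fib (M' + 1) * Nat.fib (m + 1) := by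
          rw [Nat.add_comm m (M' + 1), show M' + 1 + m = M' + m + 1 by ring]
          exact Nat.fib_add M' m
        have hfM' : Nat.fib M' ≤ q0 + q1 + q2 :=
          le_trans (Nat.fib_mono (by omega)) I1
        have t2 : Nat.fib M' * Nat.fib m + Nat.fib (M' + 1) * Nat.fib (m + 1) ≤
            (q0 + q1 + q2) * b + (q1 + q2) * a :=
          Nat.add_le_add (Nat.mul_le_mul hfM' hYc) (Nat.mul_le_mul hfM3 hXc)
        have t3 : (q0 + q1 + q2) * b + (q1 + q2) * a =
            (q1 * a + q0 * b) + (q2 * a + (q1 + q2) * b) := by ring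
        calc Nat.fib (m + (M' + 1))
            ≤ (q0 + q1 + q2) * b + (q1 + q2) * a := t1 ▸ t2
          _ = (q1 * a + q0 * b) + (q2 * a + (q1 + q2) * b) := t3
          _ ≤ r1 + r2 := Nat.add_le_add m1 m2'

open scoped Classical in
lemma XY_bound : ∀ (n : ℕ) (v : V), (P.desc v).card ≤ n →
    Nat.fib ((P.desc v).card + 1) ≤ P.Xc v ∧ Nat.fib ((P.desc v).card) ≤ P.Yc v := by
  intro n
  induction n with
  | zero =>
    intro v hv
    have : 0 < (P.desc v).card := Finset.card_pos.2 ⟨v, P.mem_desc_self v⟩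
    omega
  | succ n ih =>
    intro v hv
    have hch : ∀ c ∈ P.children v,
        Nat.fib ((P.desc c).card + 1) ≤ P.Xc c ∧ Nat.fib (P.desc c).card ≤ P.Yc c := by
      intro c hc
      exact ih c (by have := P.card_desc_lt_of_children hc; omega)
    obtain ⟨I0, I1, I2, I3⟩ := P.q_invariants v (P.children v) (le_refl _) hch
    have hM : ((P.children v).biUnion P.desc).card = (P.desc v).card - 1 := by
      rw [← P.erase_desc, Finset.card_erase_of_mem (P.mem_desc_self v)]
    have hpos : 1 ≤ (P.desc v).card := Finset.card_pos.2 ⟨v, P.mem_desc_self v⟩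
    constructor
    · refine le_trans ?_ (P.sum3_le_Xc v)
      have : (P.desc v).card + 1 = ((P.children v).biUnion P.desc).card + 2 := by omega
      rw [this]
      exact I1
    · refine le_trans ?_ (P.sum2_le_Yc v)
      have : (P.desc v).card = ((P.children v).biUnion P.desc).card + 1 := by omega
      rw [this]
      exact I2

open scoped Classical in
lemma fib_le_Yc_root : Nat.fib (Fintype.card V) ≤ P.Yc P.r := by
  have h := (P.XY_bound (P.desc P.r).card P.r le_rfl).2
  rwa [P.desc_r, Finset.card_univ] at h

end PStruct

namespace PStruct

variable {V : Type*} [Fintype V] [DecidableEq V] (G : SimpleGraph V) [DecidableRel G.Adj]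
  (P : PStruct V)

/-- `P` is a parent structure compatible with the graph `G`. -/
def Good : Prop :=
  (∀ v, v ≠ P.r → G.Adj (P.par v) v) ∧
  (∀ a b, G.Adj a b → (b ≠ P.r ∧ P.par b = a) ∨ (a ≠ P.r ∧ P.par a = b))

/-- The orientation associated to a set `S` of "upward" vertices. -/
def DS (S : Finset V) : V → V → Bool := fun a b =>
  decide ((b ≠ P.r ∧ P.par b = a ∧ b ∉ S) ∨ (a ≠ P.r ∧ P.par a = b ∧ a ∈ S))

lemma no_two_cycle {a b : V} (h1 : b ≠ P.r ∧ P.par b = a) (h2 : a ≠ P.r ∧ P.par a = b) :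
    False := by
  have ha := P.hdep a h2.1
  have hb := P.hdep b h1.1
  rw [h2.2] at ha
  rw [h1.2] at hb
  omega

lemma par_ne_self {a : V} (ha : a ≠ P.r) : P.par a ≠ a := by
  have := P.hdep a ha
  intro h
  rw [h] at this
  omega

lemma DS_up_iff {S : Finset V} {c : V} (hc : c ≠ P.r) :
    P.DS S c (P.par c) = true ↔ c ∈ S := by
  unfold DS
  rw [decide_eq_true_iff]
  constructor
  · rintro (⟨h1, h2, h3⟩ | ⟨h1, h2, h3⟩)
    · exfalso
      have d1 := P.hdep c hc
      have d2 := P.hdep (P.par c) h1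
      rw [h2] at d2
      omega
    · exact h3
  · intro h
    exact Or.inr ⟨hc, rfl, h⟩

lemma DS_down_iff {S : Finset V} {c : V} (hc : c ≠ P.r) :
    P.DS S (P.par c) c = true ↔ c ∉ S := by
  unfold DS
  rw [decide_eq_true_iff]
  constructor
  · rintro (⟨h1, h2, h3⟩ | ⟨h1, h2, h3⟩)
    · exact h3
    · exfalso
      have d1 := P.hdep c hc
      have d2 := P.hdep (P.par c) h1
      rw [h2] at d2
      omega
  · intro h
    exact Or.inl ⟨hc, rfl, h⟩

lemma DS_isOrientation (hG : P.Good G) (S : Finset V) : IsOrientation G (P.DS S) := by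
  constructor
  · intro a b h
    unfold DS at h
    rw [decide_eq_true_iff] at h
    rcases h with ⟨h1, h2, _⟩ | ⟨h1, h2, _⟩
    · rw [← h2]; exact hG.1 b h1
    · rw [← h2]; exact (hG.1 a h1).symm
  · intro a b hab
    rcases hG.2 a b hab with ⟨hbr, hpb⟩ | ⟨har, hpa⟩
    · have h1 : ¬ (a ≠ P.r ∧ P.par a = b ∧ a ∈ S) := by
        rintro ⟨x1, x2, _⟩
        exact P.no_two_cycle ⟨hbr, hpb⟩ ⟨x1, x2⟩
      have h2 : ¬ (P.par a = b ∧ a ∉ S) ∨ True := Or.inr trivial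
      have h3 : ¬ (a ≠ P.r ∧ P.par a = b ∧ a ∉ S) := by
        rintro ⟨x1, x2, _⟩
        exact P.no_two_cycle ⟨hbr, hpb⟩ ⟨x1, x2⟩
      by_cases hbS : b ∈ S <;>
        simp [DS, hbr, hpb, hbS, h1, h3]
    · have h1 : ¬ (b ≠ P.r ∧ P.par b = a ∧ b ∈ S) := by
        rintro ⟨x1, x2, _⟩
        exact P.no_two_cycle ⟨har, hpa⟩ ⟨x1, x2⟩
      have h3 : ¬ (b ≠ P.r ∧ P.par b = a ∧ b ∉ S) := by
        rintro ⟨x1, x2, _⟩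
        exact P.no_two_cycle ⟨har, hpa⟩ ⟨x1, x2⟩
      by_cases haS : a ∈ S <;>
        simp [DS, har, hpa, haS, h1, h3]

lemma imm_true_iff {D : V → V → Bool} {i j k : V} :
    immoralities G D i j k = true ↔ (D i j = true ∧ D k j = true ∧ i ≠ k ∧ ¬ G.Adj i k) := by
  simp [immoralities, and_assoc]

lemma nonadj_par_grand (hG : P.Good G) {j c : V} (hj : j ≠ P.r) (hc : c ≠ P.r)
    (hjc : P.par c = j) : ¬ G.Adj (P.par j) c ∧ P.par j ≠ c := by
  have d1 := P.hdep j hj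
  have d2 := P.hdep c hc
  rw [hjc] at d2
  constructor
  · intro hadj
    rcases hG.2 (P.par j) c hadj with ⟨h1, h2⟩ | ⟨h1, h2⟩
    · rw [hjc] at h2
      exact P.par_ne_self hj h2.symm
    · have d3 := P.hdep (P.par j) h1
      rw [h2] at d3
      omega
  · intro h
    rw [h] at d1
    omega

lemma nonadj_siblings (hG : P.Good G) {j c c' : V} (hc : c ≠ P.r) (hc' : c' ≠ P.r)
    (h1 : P.par c = j) (h2 : P.par c' = j) (hne : c' ≠ c) : ¬ G.Adj c' c := by
  intro hadj
  have d1 := P.hdep c hc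
  have d2 := P.hdep c' hc'
  rw [h1] at d1
  rw [h2] at d2
  rcases hG.2 c' c hadj with ⟨x1, x2⟩ | ⟨x1, x2⟩
  · rw [h1] at x2
    rw [← x2] at d2
    omega
  · rw [h2] at x2
    rw [← x2] at d1
    omega

open scoped Classical in
lemma mem_S_iff_imm (hG : P.Good G) {S : Finset V} (hS : S ⊆ Finset.univ.erase P.r)
    (hval : P.Valid P.r false S) {c : V} (hc : c ≠ P.r) :
    (c ∈ S ↔ ∃ x, immoralities G (P.DS S) x (P.par c) c = true) := by
  constructor
  · intro hcS
    have hDcj : P.DS S c (P.par c) = true := (P.DS_up_iff hc).2 hcS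
    have hj : P.par c ∈ P.desc P.r := by rw [P.desc_r]; exact Finset.mem_univ _
    have hcchild : c ∈ P.children (P.par c) := P.mem_children.2 ⟨hc, rfl⟩
    rcases hval (P.par c) hj with h | h
    · -- if par c = r then `false = true` which is absurd; else par c ∉ S
      by_cases hjr : P.par c = P.r
      · rw [if_pos hjr] at h
        exact absurd h (by simp)
      · rw [if_neg hjr] at h
        -- parent's parent points in
        refine ⟨P.par (P.par c), ?_⟩
        rw [imm_true_iff]
        obtain ⟨hna, hne⟩ := P.nonadj_par_grand G hG hjr hc rfl
        exact ⟨(P.DS_down_iff hjr).2 h, hDcj, hne, hna⟩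
    · -- there are at least two children of `par c` in `S`
      have hmem : c ∈ P.children (P.par c) ∩ S := Finset.mem_inter.2 ⟨hcchild, hcS⟩
      have hcard : 1 < (P.children (P.par c) ∩ S).card := by
        rcases Nat.lt_or_ge 1 (P.children (P.par c) ∩ S).card with h' | h'
        · exact h'
        · exfalso
          have : 0 < (P.children (P.par c) ∩ S).card := Finset.card_pos.2 ⟨c, hmem⟩
          omega
      obtain ⟨c', hc'mem, hc'ne⟩ := Finset.exists_mem_ne hcard c
      obtain ⟨hc'ch, hc'S⟩ := Finset.mem_inter.1 hc'mem
      obtain ⟨hc'r, hc'par⟩ := P.mem_children.1 hc'ch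
      refine ⟨c', ?_⟩
      rw [imm_true_iff]
      refine ⟨?_, hDcj, hc'ne, P.nonadj_siblings G hG hc hc'r rfl hc'par hc'ne⟩
      have := (P.DS_up_iff (S := S) hc'r).2 hc'S
      rwa [hc'par] at this
  · rintro ⟨x, hx⟩
    rw [imm_true_iff] at hx
    obtain ⟨_, hDcj, _, _⟩ := hx
    by_contra hcS
    have : P.DS S c (P.par c) = true := hDcj
    rw [P.DS_up_iff hc] at this
    exact hcS this

open scoped Classical in
lemma imm_injOn (hG : P.Good G) {S T : Finset V} (hS : S ∈ P.Fv P.r false)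
    (hT : T ∈ P.Fv P.r false) (h : immoralities G (P.DS S) = immoralities G (P.DS T)) :
    S = T := by
  rw [P.mem_Fv] at hS hT
  have herase : (P.desc P.r).erase P.r = Finset.univ.erase P.r := by rw [P.desc_r]
  have hS1 : S ⊆ Finset.univ.erase P.r := herase ▸ hS.1
  have hT1 : T ⊆ Finset.univ.erase P.r := herase ▸ hT.1
  ext c
  by_cases hc : c = P.r
  · subst hc
    constructor <;> intro hmem
    · exact absurd (hS1 hmem) (by simp)
    · exact absurd (hT1 hmem) (by simp)
  · rw [P.mem_S_iff_imm G hG hS1 hS.2 hc, P.mem_S_iff_imm G hG hT1 hT.2 hc, h]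

open scoped Classical in
lemma lower_bound (hG : P.Good G) :
    Nat.fib (Fintype.card V) ≤
      ((Finset.univ.filter (fun D : V → V → Bool => IsOrientation G D)).image
        (fun D => immoralities G D)).card := by
  classical
  have hsub : (P.Fv P.r false).image (fun S => immoralities G (P.DS S)) ⊆
      (Finset.univ.filter (fun D : V → V → Bool => IsOrientation G D)).image
        (fun D => immoralities G D) := by
    intro y hy
    obtain ⟨S, hS, rfl⟩ := Finset.mem_image.1 hy
    exact Finset.mem_image.2 ⟨P.DS S, Finset.mem_filter.2
      ⟨Finset.mem_univ _, P.DS_isOrientation G hG S⟩, rfl⟩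
  have hcard : ((P.Fv P.r false).image (fun S => immoralities G (P.DS S))).card =
      P.Yc P.r := by
    rw [Finset.card_image_of_injOn]
    · rfl
    · intro S hS T hT hST
      exact P.imm_injOn G hG (by exact_mod_cast hS) (by exact_mod_cast hT) hST
  calc Nat.fib (Fintype.card V) ≤ P.Yc P.r := P.fib_le_Yc_root
    _ = ((P.Fv P.r false).image (fun S => immoralities G (P.DS S))).card := hcard.symm
    _ ≤ _ := Finset.card_le_card hsub

open scoped Classical in
lemma orientation_eq_DS (hG : P.Good G) {D : V → V → Bool} (hD : IsOrientation G D) :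
    D = P.DS ((Finset.univ.erase P.r).filter (fun c => D c (P.par c) = true)) := by
  classical
  set S := (Finset.univ.erase P.r).filter (fun c => D c (P.par c) = true) with hSdef
  have hmemS : ∀ c, c ≠ P.r → (c ∈ S ↔ D c (P.par c) = true) := by
    intro c hc
    rw [hSdef, Finset.mem_filter, Finset.mem_erase]
    simp [hc]
  funext a b
  by_cases hadj : G.Adj a b
  · rcases hG.2 a b hadj with ⟨hbr, hpb⟩ | ⟨har, hpa⟩
    · have h1 : P.DS S a b = true ↔ b ∉ S := by
        have := P.DS_down_iff (S := S) hbr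
        rwa [hpb] at this
      have h2 : b ∈ S ↔ D b a = true := by
        rw [hmemS b hbr, hpb]
      have h3 : D a b = !D b a := hD.2 a b hadj
      by_cases hba : D b a = true
      · have h4 : P.DS S a b = false :=
          Bool.eq_false_iff.2 (fun h => (h1.1 h) (h2.2 hba))
        rw [h3, hba, h4]
        rfl
      · have hba' : D b a = false := Bool.eq_false_iff.2 hba
        have h5 : P.DS S a b = true := h1.2 (fun h => hba (h2.1 h))
        rw [h3, hba', h5]
        rfl
    · have h1 : P.DS S a b = true ↔ a ∈ S := by
        have := P.DS_up_iff (S := S) har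
        rwa [hpa] at this
      have h2 : a ∈ S ↔ D a b = true := by
        rw [hmemS a har, hpa]
      by_cases hab : D a b = true
      · rw [hab, h1.2 (h2.2 hab)]
      · have hab' : D a b = false := Bool.eq_false_iff.2 hab
        have h5 : P.DS S a b = false :=
          Bool.eq_false_iff.2 (fun h => hab (h2.1 (h1.1 h)))
        rw [hab', h5]
  · have hD1 : D a b = false := Bool.eq_false_iff.2 (fun h => hadj (hD.1 a b h))
    have hD2 : P.DS S a b = false :=
      Bool.eq_false_iff.2 (fun h => hadj ((P.DS_isOrientation G hG S).1 a b h))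
    rw [hD1, hD2]

open scoped Classical in
lemma filter_orientations_eq (hG : P.Good G) :
    (Finset.univ.filter (fun D : V → V → Bool => IsOrientation G D)) =
      ((Finset.univ.erase P.r).powerset).image (fun S => P.DS S) := by
  classical
  ext D
  rw [Finset.mem_filter, Finset.mem_image]
  constructor
  · rintro ⟨-, hD⟩
    refine ⟨(Finset.univ.erase P.r).filter (fun c => D c (P.par c) = true),
      Finset.mem_powerset.2 (Finset.filter_subset _ _), (P.orientation_eq_DS G hG hD).symm⟩
  · rintro ⟨S, hS, rfl⟩
    exact ⟨Finset.mem_univ _, P.DS_isOrientation G hG S⟩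

open scoped Classical in
lemma card_orientations (hG : P.Good G) :
    (Finset.univ.filter (fun D : V → V → Bool => IsOrientation G D)).card =
      2 ^ (Fintype.card V - 1) := by
  classical
  rw [P.filter_orientations_eq G hG, Finset.card_image_of_injOn, Finset.card_powerset,
    Finset.card_erase_of_mem (Finset.mem_univ _), Finset.card_univ]
  intro S hS T hT hST
  rw [Finset.mem_coe, Finset.mem_powerset] at hS hT
  ext c
  by_cases hc : c = P.r
  · subst hc
    constructor <;> intro hmem
    · exact absurd (hS hmem) (by simp)
    · exact absurd (hT hmem) (by simp)
  · have hST' : P.DS S = P.DS T := hST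
    rw [← P.DS_up_iff (S := S) hc, ← P.DS_up_iff (S := T) hc, hST']

end PStruct

section TreeStuff

open Finset

variable {V : Type*} [Fintype V] [DecidableEq V] (G : SimpleGraph V) [DecidableRel G.Adj]

lemma exists_parent_step (hT : G.IsTree) (r u : V) (hu : u ≠ r) :
    ∃ w, G.Adj w u ∧ G.dist r w < G.dist r u := by
  have hconn := hT.isConnected
  have hreach : G.Reachable r u := hconn.preconnected r u
  obtain ⟨p, hp⟩ := hreach.exists_walk_length_eq_dist
  have hgen : ∀ {x y : V} (q : G.Walk x y), x ≠ y →
      ∃ w, G.Adj x w ∧ ∃ q' : G.Walk w y, q'.length + 1 = q.length := by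
    intro x y q hxy
    cases q with
    | nil => exact absurd rfl hxy
    | cons h q' => exact ⟨_, h, q', rfl⟩
  obtain ⟨w, hadj, q', hq'⟩ := hgen p.reverse hu
  refine ⟨w, hadj.symm, ?_⟩
  have hlen : q'.length + 1 = p.length := by
    rw [hq', SimpleGraph.Walk.length_reverse]
  have hle : G.dist r w ≤ q'.length := by
    have := SimpleGraph.dist_le q'.reverse
    simpa [SimpleGraph.Walk.length_reverse] using this
  omega

lemma exists_good (hT : G.IsTree) (r : V) :
    ∃ P : PStruct V, P.r = r ∧ P.Good G := by
  classical
  have hstep := exists_parent_step G hT r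
  set par : V → V := fun u => if h : u = r then r else (hstep u h).choose with hpar
  have hpar_spec : ∀ u (h : u ≠ r), G.Adj (par u) u ∧ G.dist r (par u) < G.dist r u := by
    intro u h
    rw [hpar]
    simp only [dif_neg h]
    exact (hstep u h).choose_spec
  refine ⟨⟨r, par, G.dist r, fun v hv => (hpar_spec v hv).2⟩, rfl, ?_, ?_⟩
  · exact fun v hv => (hpar_spec v hv).1
  · -- every edge is a parent edge
    intro a b hab
    have hcount := hT.card_edgeFinset
    have himg : (Finset.univ.erase r).image (fun u => s(par u, u)) = G.edgeFinset := by
      apply Finset.eq_of_subset_of_card_le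
      · intro e he
        obtain ⟨u, hu, rfl⟩ := Finset.mem_image.1 he
        rw [Finset.mem_erase] at hu
        rw [SimpleGraph.mem_edgeFinset, SimpleGraph.mem_edgeSet]
        exact (hpar_spec u hu.1).1
      · have hinj : Set.InjOn (fun u => s(par u, u)) ↑(Finset.univ.erase r) := by
          intro u hu w hw huw
          rw [Finset.mem_coe, Finset.mem_erase] at hu hw
          simp only [Sym2.eq_iff] at huw
          rcases huw with ⟨h1, h2⟩ | ⟨h1, h2⟩
          · exact h2
          · exfalso
            have d1 := (hpar_spec u hu.1).2
            have d2 := (hpar_spec w hw.1).2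
            rw [h1] at d1
            rw [← h2] at d2
            omega
        rw [Finset.card_image_of_injOn hinj,
          Finset.card_erase_of_mem (Finset.mem_univ _), Finset.card_univ]
        omega
    have he : s(a, b) ∈ (Finset.univ.erase r).image (fun u => s(par u, u)) := by
      rw [himg, SimpleGraph.mem_edgeFinset, SimpleGraph.mem_edgeSet]
      exact hab
    obtain ⟨u, hu, huv⟩ := Finset.mem_image.1 he
    rw [Finset.mem_erase] at hu
    simp only [Sym2.eq_iff] at huv
    rcases huv with ⟨h1, h2⟩ | ⟨h1, h2⟩
    · left
      rw [← h2]
      exact ⟨hu.1, h1⟩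
    · right
      rw [← h2]
      exact ⟨hu.1, h1⟩

end TreeStuff

section Away

variable {V : Type*} [Fintype V] [DecidableEq V] (G : SimpleGraph V) [DecidableRel G.Adj]

noncomputable def awayO (hT : G.IsTree) (v : V) : V → V → Bool :=
  ((exists_good G hT v).choose).DS ∅

lemma awayO_spec (hT : G.IsTree) (v : V) :
    IsOrientation G (awayO G hT v) ∧
    immoralities G (awayO G hT v) = (fun _ _ _ => false) ∧
    (∀ a, awayO G hT v a v = false) ∧
    (v ≠ ((exists_good G hT v).choose).r → False) := by
  obtain ⟨hr, hG⟩ := (exists_good G hT v).choose_spec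
  set P := (exists_good G hT v).choose with hP
  have hDS : ∀ a b : V, P.DS ∅ a b = true ↔ (b ≠ v ∧ P.par b = a) := by
    intro a b
    unfold PStruct.DS
    rw [decide_eq_true_iff]
    constructor
    · rintro (⟨h1, h2, _⟩ | ⟨_, _, h3⟩)
      · exact ⟨by rwa [hr] at h1, h2⟩
      · exact absurd h3 (Finset.notMem_empty _)
    · rintro ⟨h1, h2⟩
      exact Or.inl ⟨by rwa [hr], h2, Finset.notMem_empty _⟩
  refine ⟨P.DS_isOrientation G hG ∅, ?_, ?_, fun h => h hr.symm⟩
  · funext i j k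
    rw [Bool.eq_false_iff]
    intro h
    rw [PStruct.imm_true_iff] at h
    obtain ⟨h1, h2, h3, _⟩ := h
    have h1' : P.DS ∅ i j = true := h1
    have h2' : P.DS ∅ k j = true := h2
    rw [hDS] at h1' h2'
    exact h3 (h1'.2.symm.trans h2'.2)
  · intro a
    rw [Bool.eq_false_iff]
    intro h
    have h' : P.DS ∅ a v = true := h
    rw [hDS] at h'
    exact h'.1 rfl

lemma awayO_ne (hT : G.IsTree) {v w : V} (hvw : v ≠ w) : awayO G hT v ≠ awayO G hT w := by
  obtain ⟨hrw, hGw⟩ := (exists_good G hT w).choose_spec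
  intro h
  have h3v := (awayO_spec G hT v).2.2.1
  -- in `awayO w`, the vertex `v ≠ w` has an incoming edge
  have : awayO G hT w (((exists_good G hT w).choose).par v) v = true := by
    unfold awayO PStruct.DS
    rw [decide_eq_true_iff]
    exact Or.inl ⟨by rwa [hrw], rfl, Finset.notMem_empty _⟩
  rw [← h] at this
  rw [h3v _] at this
  exact Bool.false_ne_true this

lemma upper_bound (hT : G.IsTree) (hp : 1 ≤ Fintype.card V) :
    ((Finset.univ.filter (fun D : V → V → Bool => IsOrientation G D)).image
      (fun D => immoralities G D)).card ≤ 2 ^ (Fintype.card V - 1) - Fintype.card V + 1 := by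
  classical
  have hne : Nonempty V := Fintype.card_pos_iff.1 (by omega)
  obtain ⟨r⟩ := hne
  obtain ⟨P, hPr, hPg⟩ := exists_good G hT r
  set Fo := Finset.univ.filter (fun D : V → V → Bool => IsOrientation G D) with hFo
  have hFoCard : Fo.card = 2 ^ (Fintype.card V - 1) := P.card_orientations G hPg
  set B := Finset.univ.image (fun v => awayO G hT v) with hB
  have hBsub : B ⊆ Fo := by
    intro D hD
    obtain ⟨v, _, rfl⟩ := Finset.mem_image.1 hD
    exact Finset.mem_filter.2 ⟨Finset.mem_univ _, (awayO_spec G hT v).1⟩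
  have hBcard : B.card = Fintype.card V := by
    rw [hB, Finset.card_image_of_injOn, Finset.card_univ]
    intro v _ w _ h
    by_contra hvw
    exact awayO_ne G hT hvw h
  have himg : Fo.image (fun D => immoralities G D) ⊆
      insert (fun _ _ _ => false) ((Fo \ B).image (fun D => immoralities G D)) := by
    intro y hy
    obtain ⟨D, hD, rfl⟩ := Finset.mem_image.1 hy
    by_cases hDB : D ∈ B
    · obtain ⟨v, _, rfl⟩ := Finset.mem_image.1 hDB
      rw [(awayO_spec G hT v).2.1]
      exact Finset.mem_insert_self _ _
    · exact Finset.mem_insert_of_mem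
        (Finset.mem_image.2 ⟨D, Finset.mem_sdiff.2 ⟨hD, hDB⟩, rfl⟩)
  have hn2 : Fintype.card V ≤ 2 ^ (Fintype.card V - 1) := by
    have := Nat.lt_two_pow_self (n := Fintype.card V - 1)
    omega
  calc (Fo.image (fun D => immoralities G D)).card
      ≤ (insert (fun _ _ _ => false) ((Fo \ B).image (fun D => immoralities G D))).card :=
        Finset.card_le_card himg
    _ ≤ ((Fo \ B).image (fun D => immoralities G D)).card + 1 := Finset.card_insert_le _ _
    _ ≤ (Fo \ B).card + 1 := by
        have := Finset.card_image_le (s := Fo \ B) (f := fun D => immoralities G D)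
        omega
    _ = Fo.card - B.card + 1 := by rw [Finset.card_sdiff_of_subset hBsub]
    _ = 2 ^ (Fintype.card V - 1) - Fintype.card V + 1 := by rw [hFoCard, hBcard]

end Away


/-- For a tree `T` on `p ≥ 1` vertices, the number `M(T)` of Markov equivalence classes
of orientations of `T` (orientations identified iff they have the same immoralities)
satisfies `F_{p-1} ≤ M(T) ≤ 2^{p-1} - p + 1`, where `F_0 = F_1 = 1` are Fibonacci
numbers (so `F_{p-1} = Nat.fib p`). -/
theorem stmt15 {V : Type*} [Fintype V] [DecidableEq V] (G : SimpleGraph V)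
    [DecidableRel G.Adj] (hT : G.IsTree) (hp : 1 ≤ Fintype.card V) :
    Nat.fib (Fintype.card V) ≤
        ((Finset.univ.filter (fun D : V → V → Bool => IsOrientation G D)).image
          (fun D => immoralities G D)).card ∧
      ((Finset.univ.filter (fun D : V → V → Bool => IsOrientation G D)).image
          (fun D => immoralities G D)).card ≤
        2 ^ (Fintype.card V - 1) - Fintype.card V + 1 := by

  have hne : Nonempty V := Fintype.card_pos_iff.1 (by omega)
  obtain ⟨r⟩ := hne
  obtain ⟨P, hPr, hPg⟩ := exists_good G hT r
  exact ⟨P.lower_bound G hPg, upper_bound G hT hp⟩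
end
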